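/- arXiv:1702.00136 — 4 statements merged into one kernel-verified Lean document; each statement's English description precedes it below -/
import Mathlib

section
/- Assume the energy functional E satisfies conditions (E1) and (E2). Then for every u ∈ X the map t ↦ E(t,u) is Lipschitz continuous on [0,T], the power functional satisfies P(t,u) = ∂_t E(t,u) for almost every t ∈ [0,T], and E(t,u) = E(s,u) + ∫_s^t P(r,u) dr for every subinterval [s,t] ⊂ [0,T]. -/
open Filter MeasureTheory Topology Set
open scoped ENNReal

noncomputable section

variable {X : Type*} [MetricSpace X]

/-- Pointwise total variation of `u : ℝ → X` on a set `S ⊆ ℝ` (with value in `ℝ≥0∞`),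
defined as the supremum over finite increasing families of points of `S` of the sums of the
consecutive distances. -/
def varD (u : ℝ → X) (S : Set ℝ) : ℝ≥0∞ :=
  ⨆ (M : ℕ) (t : ℕ → ℝ)
    (_ : (∀ j, j ≤ M → t j ∈ S) ∧ ∀ j, j < M → t j < t (j + 1)),
    ∑ j ∈ Finset.range M, edist (u (t j)) (u (t (j + 1)))

/-- Left limit of `u` at `t`, with the convention that it equals `u 0` for `t ≤ 0`
(curves are thought of as being defined on `[0,T]`). -/
def lLim (u : ℝ → X) (t : ℝ) : X :=
  if t ≤ 0 then u 0 else Function.leftLim u t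

/-- Right limit of `u : [0,T] → X` at `t`, with the convention that it equals `u T` for
`t ≥ T`. -/
def rLim (u : ℝ → X) (T t : ℝ) : X :=
  if T ≤ t then u T else Function.rightLim u t

/-- The jump set of a curve `u : [0,T] → X`. -/
def jumpSet (u : ℝ → X) (T : ℝ) : Set ℝ :=
  {t | t ∈ Icc 0 T ∧ (lLim u t ≠ u t ∨ rLim u T t ≠ u t)}

/-- The metric slope `|DE|(t,u)` of the energy functional `E`. -/
def slopeE (E : ℝ → X → ℝ) (t : ℝ) (u : X) : ℝ≥0∞ :=
  Filter.limsup (fun v => ENNReal.ofReal ((E t u - E t v) / dist u v)) (𝓝[≠] u)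

/-- The metric derivative of a curve `θ : ℝ → X` (via `limUnder`: it coincides with the
metric derivative at every point where the latter exists). -/
def mder (θ : ℝ → X) (r : ℝ) : ℝ :=
  limUnder (𝓝[≠] r) fun s => dist (θ s) (θ r) / |s - r|

/-- `θ` is absolutely continuous on `[a,b]`. -/
def IsAC (θ : ℝ → X) (a b : ℝ) : Prop :=
  ∃ m : ℝ → ℝ, IntegrableOn m (Icc a b) ∧
    ∀ s t : ℝ, a ≤ s → s ≤ t → t ≤ b → dist (θ s) (θ t) ≤ ∫ r in s..t, m r

/-- The viscous jump dissipation cost `v(t,u₋,u₊)`. -/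
def vCost (E : ℝ → X → ℝ) (t : ℝ) (um up : X) : ℝ≥0∞ :=
  ⨅ (r₀ : ℝ) (r₁ : ℝ) (θ : ℝ → X)
    (_ : r₀ ≤ r₁ ∧ IsAC θ r₀ r₁ ∧ θ r₀ = um ∧ θ r₁ = up),
    ∫⁻ r in Ioc r₀ r₁, ENNReal.ofReal (mder θ r) * max (slopeE E t (θ r)) 1

/-- The viscously corrected distance `D_μ(x,y) = d(x,y) + (μ/2) d(x,y)²`. -/
def Dmu (μ : ℝ) (x y : X) : ℝ := dist x y + μ / 2 * dist x y ^ 2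

/-- The residual stability function `R_μ(t,x) = sup_y (E(t,x) − E(t,y) − D_μ(x,y))`. -/
def Rmu (E : ℝ → X → ℝ) (μ t : ℝ) (x : X) : ℝ≥0∞ :=
  ⨆ y : X, ENNReal.ofReal (E t x - E t y - Dmu μ x y)

/-- The holes of a compact set `K ⊆ ℝ` (connected components of `[inf K, sup K] ∖ K`),
identified with the pairs of their endpoints. -/
def holes (K : Set ℝ) : Set (ℝ × ℝ) :=
  {p | p.1 ∈ K ∧ p.2 ∈ K ∧ p.1 < p.2 ∧ Ioo p.1 p.2 ∩ K = ∅}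

/-- The visco-energetic transition cost `Trc_μ(t,θ,K)`. -/
def trCost (E : ℝ → X → ℝ) (μ t : ℝ) (θ : ℝ → X) (K : Set ℝ) : ℝ≥0∞ :=
  varD θ K
    + (∑' p : ↥(holes K),
        ENNReal.ofReal (μ / 2 * dist (θ (p : ℝ × ℝ).1) (θ (p : ℝ × ℝ).2) ^ 2))
    + ∑' s : ↥(K \ {sSup K}), Rmu E μ t (θ (s : ℝ))

/-- The visco-energetic jump dissipation cost `c_μ(t,u₋,u₊)`. -/
def veCost (E : ℝ → X → ℝ) (μ : ℝ) (t : ℝ) (um up : X) : ℝ≥0∞ :=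
  ⨅ (K : Set ℝ) (θ : ℝ → X)
    (_ : K.Nonempty ∧ IsCompact K ∧ ContinuousOn θ K ∧ θ (sInf K) = um ∧ θ (sSup K) = up),
    trCost E μ t θ K

/-- The jump contribution `Jmp_{Δ_e}(u;[t₀,t₁])` of the incremental cost associated with a
jump dissipation cost `e`. -/
def jmpVar (e : ℝ → X → X → ℝ≥0∞) (u : ℝ → X) (T t₀ t₁ : ℝ) : ℝ≥0∞ :=
  (e t₀ (u t₀) (rLim u T t₀) - edist (u t₀) (rLim u T t₀))
    + (e t₁ (lLim u t₁) (u t₁) - edist (lLim u t₁) (u t₁))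
    + ∑' t : ↥(jumpSet u T ∩ Ioo t₀ t₁),
        ((e (t : ℝ) (lLim u (t : ℝ)) (u (t : ℝ)) - edist (lLim u (t : ℝ)) (u (t : ℝ)))
          + (e (t : ℝ) (u (t : ℝ)) (rLim u T (t : ℝ))
              - edist (u (t : ℝ)) (rLim u T (t : ℝ))))

/-- The augmented total variation `Var_{d,e}(u;[t₀,t₁])`. -/
def varAug (e : ℝ → X → X → ℝ≥0∞) (u : ℝ → X) (T t₀ t₁ : ℝ) : ℝ≥0∞ :=
  varD u (Icc t₀ t₁) + jmpVar e u T t₀ t₁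

/-- Condition (E1): lower semicontinuity and compactness of the sublevel sets of the
perturbed functional `F(t,u) = E(t,u) + d(x₀,u)` on `[0,T] × X`. -/
def CondE1 (E : ℝ → X → ℝ) (T : ℝ) (x₀ : X) : Prop :=
  ∀ C : ℝ,
    LowerSemicontinuousOn (fun p : ℝ × X => E p.1 p.2)
      {p : ℝ × X | p.1 ∈ Icc 0 T ∧ E p.1 p.2 + dist x₀ p.2 ≤ C} ∧
    IsCompact {p : ℝ × X | p.1 ∈ Icc 0 T ∧ E p.1 p.2 + dist x₀ p.2 ≤ C}

/-- Condition (E2): power control for the power functional `P`, with constant `CP`. -/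
def CondE2 (E P : ℝ → X → ℝ) (T : ℝ) (x₀ : X) (CP : ℝ) : Prop :=
  0 < CP ∧
    ∀ t ∈ Icc (0 : ℝ) T, ∀ u : X,
      (P t u : EReal) ≤
          Filter.liminf (fun s => (((E t u - E s u) / (t - s) : ℝ) : EReal)) (𝓝[Ico 0 t] t) ∧
        Filter.limsup (fun s => (((E s u - E t u) / (s - t) : ℝ) : EReal)) (𝓝[Ioc t T] t) ≤
          (P t u : EReal) ∧
        |P t u| ≤ CP * (E t u + dist x₀ u)

/-- Condition (E3): conditional upper semicontinuity of the power. -/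
def CondE3 (E P : ℝ → X → ℝ) (T : ℝ) : Prop :=
  ∀ (tn : ℕ → ℝ) (un : ℕ → X) (t : ℝ) (u : X),
    (∀ n, tn n ∈ Icc (0 : ℝ) T) → t ∈ Icc (0 : ℝ) T →
    Tendsto tn atTop (𝓝 t) → Tendsto un atTop (𝓝 u) →
    Tendsto (fun n => E (tn n) (un n)) atTop (𝓝 (E t u)) →
    Filter.limsup (fun n => ((P (tn n) (un n) : ℝ) : EReal)) atTop ≤ (P t u : EReal)

/-- Condition (E3'): upper semicontinuity of the power and lower semicontinuity of the slope
along sequences with bounded energy and slope. -/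
def CondE3' (E P : ℝ → X → ℝ) (T : ℝ) (x₀ : X) : Prop :=
  ∀ (tn : ℕ → ℝ) (un : ℕ → X) (t : ℝ) (u : X),
    (∀ n, tn n ∈ Icc (0 : ℝ) T) → t ∈ Icc (0 : ℝ) T →
    Tendsto tn atTop (𝓝 t) → Tendsto un atTop (𝓝 u) →
    (∃ C : ℝ, ∀ n, E 0 (un n) + dist x₀ (un n) ≤ C) →
    (∃ S : ℝ≥0∞, S ≠ ⊤ ∧ ∀ n, slopeE E (tn n) (un n) ≤ S) →
    slopeE E t u ≤ Filter.liminf (fun n => slopeE E (tn n) (un n)) atTop ∧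
      Filter.limsup (fun n => ((P (tn n) (un n) : ℝ) : EReal)) atTop ≤ (P t u : EReal)

/-- Condition (E4): the chain-rule inequality. -/
def CondE4 (E P : ℝ → X → ℝ) (T : ℝ) : Prop :=
  ∀ u : ℝ → X, IsAC u 0 T →
    IsAC (fun t => E t (u t)) 0 T ∧
      ∀ᵐ t ∂(volume.restrict (Ioo (0 : ℝ) T)),
        DifferentiableAt ℝ (fun s => E s (u s)) t ∧
          ENNReal.ofReal (P t (u t) - deriv (fun s => E s (u s)) t) ≤
            ENNReal.ofReal (mder u t) * slopeE E t (u t)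

/-- Energetic solution of the rate-independent system `(X,E,d)`. -/
def IsEnergeticSol (E P : ℝ → X → ℝ) (T : ℝ) (u : ℝ → X) : Prop :=
  varD u (Icc 0 T) ≠ ⊤ ∧
    ∀ t ∈ Icc (0 : ℝ) T,
      (∀ v : X, E t (u t) ≤ E t v + dist (u t) v) ∧
        E t (u t) + (varD u (Icc 0 t)).toReal =
          E 0 (u 0) + ∫ s in (0 : ℝ)..t, P s (u s)

/-- Balanced Viscosity solution of the rate-independent system `(X,E,d)`. -/
def IsBVSol (E P : ℝ → X → ℝ) (T : ℝ) (u : ℝ → X) : Prop :=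
  varD u (Icc 0 T) ≠ ⊤ ∧
    (∀ t ∈ Icc (0 : ℝ) T \ jumpSet u T, slopeE E t (u t) ≤ 1) ∧
    ∀ t ∈ Icc (0 : ℝ) T,
      varAug (vCost E) u T 0 t ≠ ⊤ ∧
        E t (u t) + (varAug (vCost E) u T 0 t).toReal =
          E 0 (u 0) + ∫ s in (0 : ℝ)..t, P s (u s)

/-- μ-Visco-Energetic solution of the rate-independent system `(X,E,d)`. -/
def IsVESol (E P : ℝ → X → ℝ) (T μ : ℝ) (u : ℝ → X) : Prop :=
  varD u (Icc 0 T) ≠ ⊤ ∧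
    (∀ t ∈ Icc (0 : ℝ) T \ jumpSet u T, ∀ v : X, E t (u t) ≤ E t v + Dmu μ (u t) v) ∧
    ∀ t ∈ Icc (0 : ℝ) T,
      varAug (veCost E μ) u T 0 t ≠ ⊤ ∧
        E t (u t) + (varAug (veCost E μ) u T 0 t).toReal =
          E 0 (u 0) + ∫ s in (0 : ℝ)..t, P s (u s)


lemma gronwall_creep {a b K : ℝ} (hab : a ≤ b) (hK : 0 ≤ K) {g : ℝ → ℝ}
    (h0 : ∀ t ∈ Icc a b, 0 ≤ g t)
    (hcl : ∀ B : ℝ → ℝ, Continuous B → IsClosed {t | t ∈ Icc a b ∧ g t ≤ B t})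
    (hstep : ∀ t, t ∈ Ico a b → ∀ δ : ℝ, 0 < δ → ∃ η > 0, ∀ s, t < s → s ≤ b → s ≤ t + η →
        g s ≤ g t + (K * g t + δ) * (s - t)) :
    g b ≤ g a * Real.exp (K * (b - a)) := by
  have key : ∀ ε : ℝ, 0 < ε → g b ≤ (g a + ε) * Real.exp ((K + ε) * (b - a)) := by
    intro ε hε
    set B : ℝ → ℝ := fun t => (g a + ε) * Real.exp ((K + ε) * (t - a)) with hB
    have hBcont : Continuous B := by fun_prop
    set S := {t | t ∈ Icc a b ∧ g t ≤ B t} with hS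
    have haS : a ∈ S := by
      refine ⟨⟨le_refl a, hab⟩, ?_⟩
      simp only [hB, sub_self, mul_zero, Real.exp_zero, mul_one]
      linarith
    have hne : S.Nonempty := ⟨a, haS⟩
    have hbdd : BddAbove S := ⟨b, fun t ht => ht.1.2⟩
    have hclosed : IsClosed S := hcl B hBcont
    have hmS : sSup S ∈ S := hclosed.csSup_mem hne hbdd
    set m := sSup S with hm
    have hma : a ≤ m := le_csSup hbdd haS
    have hmb : m ≤ b := hmS.1.2
    rcases eq_or_lt_of_le hmb with h | h
    · have := hmS.2
      rw [h] at this
      exact this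
    · exfalso
      obtain ⟨η, hη, hstepm⟩ := hstep m ⟨hma, h⟩ (ε * ε) (mul_pos hε hε)
      set s := min b (m + η) with hsdef
      have hms : m < s := lt_min h (by linarith)
      have hsb : s ≤ b := min_le_left _ _
      have hsm : s ≤ m + η := min_le_right _ _
      have h1 : g s ≤ g m + (K * g m + ε * ε) * (s - m) := hstepm s hms hsb hsm
      have hgm0 : 0 ≤ g m := h0 m ⟨hma, hmb⟩
      have hBm : g m ≤ B m := hmS.2
      have hga0 : 0 ≤ g a := h0 a ⟨le_refl a, hab⟩
      have hBmε : ε ≤ B m := by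
        have h2 : (1:ℝ) ≤ Real.exp ((K+ε)*(m-a)) := Real.one_le_exp (by nlinarith)
        have : (0+ε) * 1 ≤ (g a + ε) * Real.exp ((K+ε)*(m-a)) := by
          apply mul_le_mul (by linarith) h2 zero_le_one (by linarith)
        simpa [hB] using this
      have hBs : B m * Real.exp ((K + ε) * (s - m)) = B s := by
        simp only [hB, mul_assoc, ← Real.exp_add]
        ring_nf
      have hexp : (K + ε) * (s - m) + 1 ≤ Real.exp ((K + ε) * (s - m)) :=
        Real.add_one_le_exp _
      have hBm0 : 0 ≤ B m := le_trans hgm0 hBm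
      have h2 : g m + (K * g m + ε * ε) * (s - m) ≤ B s := by
        rw [← hBs]
        have hsm0 : 0 ≤ s - m := by linarith
        nlinarith [mul_le_mul_of_nonneg_left hexp hBm0,
          mul_le_mul_of_nonneg_right hBm hsm0,
          mul_le_mul_of_nonneg_left (mul_le_mul_of_nonneg_right hBm hsm0) hK,
          mul_le_mul_of_nonneg_right hBmε hsm0]
      have hsS : s ∈ S := ⟨⟨le_trans hma hms.le, hsb⟩, le_trans h1 h2⟩
      exact absurd (le_csSup hbdd hsS) (not_le.2 hms)
  have hcont : Tendsto (fun ε : ℝ => (g a + ε) * Real.exp ((K + ε) * (b - a)))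
      (𝓝[>] (0:ℝ)) (𝓝 ((g a + 0) * Real.exp ((K + 0) * (b - a)))) := by
    apply Tendsto.mono_left _ nhdsWithin_le_nhds
    exact (Continuous.tendsto (by fun_prop) 0)
  have := ge_of_tendsto hcont (by
    filter_upwards [self_mem_nhdsWithin] with ε hε
    exact key ε hε)
  simpa using this


open intervalIntegral in
lemma lipschitz_ftc {h : ℝ → ℝ} {L : NNReal} (hL : LipschitzWith L h) (a b : ℝ) :
    ∫ r in a..b, deriv h r = h b - h a := by
  have hcont : Continuous h := hL.continuous
  set δ : ℕ → ℝ := fun n => 1 / (n + 1) with hδ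
  have hδpos : ∀ n, 0 < δ n := fun n => by positivity
  have hδlim : Tendsto δ atTop (𝓝 0) := tendsto_one_div_add_atTop_nhds_zero_nat
  set F : ℕ → ℝ → ℝ := fun n r => (h (r + δ n) - h r) / δ n with hF
  -- each F n integrates to a difference of averages
  have step1 : ∀ n, ∫ r in a..b, F n r
      = ((∫ x in b..(b + δ n), h x) - ∫ x in a..(a + δ n), h x) / δ n := by
    intro n
    have i1 : IntervalIntegrable (fun r => h (r + δ n)) volume a b :=
      (hcont.comp (continuous_id.add continuous_const)).intervalIntegrable _ _
    have i2 : IntervalIntegrable h volume a b := hcont.intervalIntegrable _ _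
    have e1 : ∫ r in a..b, F n r
        = ((∫ r in a..b, h (r + δ n)) - ∫ r in a..b, h r) / δ n := by
      rw [← integral_sub i1 i2, ← intervalIntegral.integral_div]
    rw [e1, integral_comp_add_right (fun x => h x) (δ n)]
    have hA : (∫ x in a..(a + δ n), h x) + (∫ x in (a + δ n)..(b + δ n), h x)
        = ∫ x in a..(b + δ n), h x :=
      integral_add_adjacent_intervals (hcont.intervalIntegrable _ _)
        (hcont.intervalIntegrable _ _)
    have hB : (∫ x in a..b, h x) + (∫ x in b..(b + δ n), h x)
        = ∫ x in a..(b + δ n), h x :=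
      integral_add_adjacent_intervals (hcont.intervalIntegrable _ _)
        (hcont.intervalIntegrable _ _)
    congr 1
    linarith
  -- dominated convergence
  have step2 : Tendsto (fun n => ∫ r in a..b, F n r) atTop
      (𝓝 (∫ r in a..b, deriv h r)) := by
    apply intervalIntegral.tendsto_integral_filter_of_dominated_convergence
      (bound := fun _ => (L : ℝ))
    · exact Eventually.of_forall (fun n =>
        ((hcont.comp (continuous_id.add continuous_const)).sub hcont).div_const
          (δ n) |>.aestronglyMeasurable)
    · refine Eventually.of_forall (fun n => ?_)
      refine Eventually.of_forall (fun x _ => ?_)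
      have := hL.dist_le_mul (x + δ n) x
      rw [Real.dist_eq, Real.dist_eq] at this
      have h2 : |x + δ n - x| = δ n := by
        rw [add_sub_cancel_left, abs_of_pos (hδpos n)]
      rw [h2] at this
      have h3 : |F n x| = |h (x + δ n) - h x| / δ n := by
        rw [hF]; simp [abs_div, abs_of_pos (hδpos n)]
      rw [Real.norm_eq_abs, h3, div_le_iff₀ (hδpos n)]
      exact this
    · exact intervalIntegrable_const
    · filter_upwards [hL.ae_differentiableAt] with x hx _
      have hd : HasDerivAt h (deriv h x) x := hx.hasDerivAt
      have hslope := hasDerivAt_iff_tendsto_slope.1 hd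
      have hseq : Tendsto (fun n => x + δ n) atTop (𝓝[≠] x) := by
        rw [tendsto_nhdsWithin_iff]
        constructor
        · simpa using (tendsto_const_nhds.add hδlim)
        · exact Eventually.of_forall (fun n => by
            simp only [mem_compl_iff, mem_singleton_iff]
            have := hδpos n; intro hcon; nlinarith [congrArg (· - x) hcon])
      have := hslope.comp hseq
      convert this using 2 with n
      rw [Function.comp_apply, slope_def_field, add_sub_cancel_left]
  -- limit of averages
  have avg : ∀ v : ℝ, Tendsto (fun n => (∫ x in v..(v + δ n), h x) / δ n) atTop (𝓝 (h v)) := by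
    intro v
    have hG : HasDerivAt (fun w => ∫ x in v..w, h x) (h v) v :=
      integral_hasDerivAt_right (hcont.intervalIntegrable _ _)
        (hcont.stronglyMeasurableAtFilter _ _) hcont.continuousAt
    have hslope := hasDerivAt_iff_tendsto_slope.1 hG
    have hseq : Tendsto (fun n => v + δ n) atTop (𝓝[≠] v) := by
      rw [tendsto_nhdsWithin_iff]
      constructor
      · simpa using (tendsto_const_nhds.add hδlim)
      · exact Eventually.of_forall (fun n => by
          simp only [mem_compl_iff, mem_singleton_iff]
          have := hδpos n; intro hcon; nlinarith [congrArg (· - v) hcon])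
    have := hslope.comp hseq
    convert this using 2 with n
    rw [Function.comp_apply, slope_def_field, add_sub_cancel_left,
      intervalIntegral.integral_same]
    ring
  have step3 : Tendsto (fun n => ((∫ x in b..(b + δ n), h x) - ∫ x in a..(a + δ n), h x) / δ n)
      atTop (𝓝 (h b - h a)) := by
    have := (avg b).sub (avg a)
    convert this using 2 with n
    ring
  have : Tendsto (fun n => ∫ r in a..b, F n r) atTop (𝓝 (h b - h a)) := by
    simp only [step1]; exact step3
  exact tendsto_nhds_unique step2 this


set_option maxHeartbeats 1000000 in
theorem statement0
    {X : Type*} [MetricSpace X] [CompleteSpace X]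
    (T : ℝ) (hT : 0 < T) (E P : ℝ → X → ℝ) (x₀ : X) (CP : ℝ)
    (hE1 : CondE1 E T x₀) (hE2 : CondE2 E P T x₀ CP) :
    ∀ u : X,
      (∃ L : NNReal, LipschitzOnWith L (fun t => E t u) (Icc 0 T)) ∧
      (∀ᵐ t ∂(volume.restrict (Ioo (0 : ℝ) T)), HasDerivAt (fun s => E s u) (P t u) t) ∧
      ∀ s t : ℝ, 0 ≤ s → s ≤ t → t ≤ T → E t u = E s u + ∫ r in s..t, P r u := by
  obtain ⟨hCP, hE2'⟩ := hE2
  intro u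
  set f : ℝ → ℝ := fun t => E t u with hf
  set c : ℝ := dist x₀ u with hc
  set g : ℝ → ℝ := fun t => f t + c with hgdef
  -- nonnegativity of g on [0,T]
  have h0 : ∀ t ∈ Icc (0:ℝ) T, 0 ≤ g t := by
    intro t ht
    have h1 := (hE2' t ht u).2.2
    have h2 := abs_nonneg (P t u)
    simp only [hgdef, hf, hc]
    nlinarith
  -- closedness of mixed sublevel sets
  have hcl : ∀ a b : ℝ, 0 ≤ a → b ≤ T → ∀ B : ℝ → ℝ, Continuous B →
      IsClosed {t | t ∈ Icc a b ∧ g t ≤ B t} := by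
    intro a b ha hb B hBcont
    rcases le_or_gt a b with hab | hab
    swap
    · have : {t | t ∈ Icc a b ∧ g t ≤ B t} = ∅ := by
        ext t; simp only [mem_setOf_eq, mem_empty_iff_false, iff_false]
        rintro ⟨⟨h1, h2⟩, -⟩; linarith
      rw [this]; exact isClosed_empty
    obtain ⟨C, hC⟩ : ∃ C, ∀ t ∈ Icc a b, B t ≤ C := by
      obtain ⟨z, -, hz⟩ := isCompact_Icc.exists_isMaxOn (nonempty_Icc.2 hab)
        hBcont.continuousOn
      exact ⟨B z, fun t ht => hz ht⟩
    have hSC := hE1 C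
    have hKclosed : IsClosed {t : ℝ | t ∈ Icc 0 T ∧ g t ≤ C} := by
      have heq : {t : ℝ | t ∈ Icc 0 T ∧ g t ≤ C}
          = (fun t : ℝ => (t, u)) ⁻¹'
            {p : ℝ × X | p.1 ∈ Icc 0 T ∧ E p.1 p.2 + dist x₀ p.2 ≤ C} := rfl
      rw [heq]
      exact (hSC.2.isClosed).preimage (continuous_id.prodMk continuous_const)
    apply IsSeqClosed.isClosed
    intro tn m htn hlim
    have hmab : m ∈ Icc a b := isClosed_Icc.mem_of_tendsto hlim
      (Eventually.of_forall fun n => (htn n).1)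
    have hsub : ∀ n, tn n ∈ Icc (0:ℝ) T ∧ g (tn n) ≤ C := by
      intro n
      refine ⟨⟨ha.trans (htn n).1.1, (htn n).1.2.trans hb⟩, (htn n).2.trans (hC _ (htn n).1)⟩
    have hmK : m ∈ {t : ℝ | t ∈ Icc 0 T ∧ g t ≤ C} :=
      hKclosed.mem_of_tendsto hlim (Eventually.of_forall hsub)
    refine ⟨hmab, ?_⟩
    by_contra hcon
    push_neg at hcon
    -- lower semicontinuity argument
    have hmem : (m, u) ∈ {p : ℝ × X | p.1 ∈ Icc 0 T ∧ E p.1 p.2 + dist x₀ p.2 ≤ C} :=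
      ⟨hmK.1, hmK.2⟩
    have hlsc := hSC.1 (m, u) hmem
    set y : ℝ := (f m + B m - c) / 2 with hy
    have hyltfm : y < E m u := by
      simp only [hy, hf]
      have : B m < g m := hcon
      simp only [hgdef] at this
      linarith
    have hev := hlsc y hyltfm
    have hptend : Tendsto (fun n => (tn n, u)) atTop
        (𝓝[{p : ℝ × X | p.1 ∈ Icc 0 T ∧ E p.1 p.2 + dist x₀ p.2 ≤ C}] (m, u)) := by
      rw [tendsto_nhdsWithin_iff]
      exact ⟨hlim.prodMk_nhds tendsto_const_nhds,
        Eventually.of_forall fun n => (hsub n : _)⟩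
    have hev2 : ∀ᶠ n in atTop, y < E (tn n) u := hptend.eventually hev
    have hev3 : ∀ᶠ n in atTop, y ≤ B (tn n) - c := by
      filter_upwards [hev2] with n hn
      have := (htn n).2
      simp only [hgdef, hf] at this
      linarith
    have hBtend : Tendsto (fun n => B (tn n) - c) atTop (𝓝 (B m - c)) :=
      ((hBcont.tendsto m).comp hlim).sub tendsto_const_nhds
    have := ge_of_tendsto hBtend hev3
    have hbm : B m < g m := hcon
    simp only [hgdef] at hbm
    simp only [hy] at this
    linarith
  -- step estimates from (E2)
  have hstepR : ∀ t ∈ Icc (0:ℝ) T, t < T → ∀ δ : ℝ, 0 < δ → ∃ η > 0,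
      ∀ s, t < s → s ≤ T → s ≤ t + η → g s ≤ g t + (CP * g t + δ) * (s - t) := by
    intro t ht htT δ hδ
    obtain ⟨-, hlsup, habs⟩ := hE2' t ht u
    have hPlt : (P t u : EReal) < ((CP * g t + δ : ℝ) : EReal) := by
      rw [EReal.coe_lt_coe_iff]
      have h1 : P t u ≤ |P t u| := le_abs_self _
      simp only [hgdef, hf, hc]
      linarith
    have hev : ∀ᶠ s in 𝓝[Ioc t T] t,
        (((E s u - E t u) / (s - t) : ℝ) : EReal) < ((CP * g t + δ : ℝ) : EReal) :=
      Filter.eventually_lt_of_limsup_lt (lt_of_le_of_lt hlsup hPlt)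
    rw [eventually_nhdsWithin_iff, Metric.eventually_nhds_iff] at hev
    obtain ⟨η, hη, hev⟩ := hev
    refine ⟨η / 2, by linarith, fun s hts hsT hsη => ?_⟩
    have hds : dist s t < η := by rw [Real.dist_eq, abs_of_pos (by linarith : (0:ℝ) < s - t)]; linarith
    have h2 := hev hds ⟨hts, hsT⟩
    rw [EReal.coe_lt_coe_iff, div_lt_iff₀ (by linarith : (0:ℝ) < s - t)] at h2
    simp only [hgdef, hf] at h2 ⊢
    nlinarith
  have hstepL : ∀ t ∈ Icc (0:ℝ) T, 0 < t → ∀ δ : ℝ, 0 < δ → ∃ η > 0,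
      ∀ s, 0 ≤ s → s < t → t ≤ s + η → g s ≤ g t + (CP * g t + δ) * (t - s) := by
    intro t ht ht0 δ hδ
    obtain ⟨hlinf, -, habs⟩ := hE2' t ht u
    have hPgt : ((-(CP * g t) - δ : ℝ) : EReal) < (P t u : EReal) := by
      rw [EReal.coe_lt_coe_iff]
      have h1 : -|P t u| ≤ P t u := neg_abs_le _
      simp only [hgdef, hf, hc]
      linarith
    have hev : ∀ᶠ s in 𝓝[Ico 0 t] t,
        ((-(CP * g t) - δ : ℝ) : EReal) < (((E t u - E s u) / (t - s) : ℝ) : EReal) :=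
      Filter.eventually_lt_of_lt_liminf (lt_of_lt_of_le hPgt hlinf)
    rw [eventually_nhdsWithin_iff, Metric.eventually_nhds_iff] at hev
    obtain ⟨η, hη, hev⟩ := hev
    refine ⟨η / 2, by linarith, fun s hs0 hst hsη => ?_⟩
    have hds : dist s t < η := by rw [Real.dist_eq, abs_of_neg (by linarith : s - t < 0)]; linarith
    have h2 := hev hds ⟨hs0, hst⟩
    rw [EReal.coe_lt_coe_iff, lt_div_iff₀ (by linarith : (0:ℝ) < t - s)] at h2
    simp only [hgdef, hf] at h2 ⊢
    nlinarith
  -- Gronwall bounds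
  have boundF : ∀ a b : ℝ, 0 ≤ a → a ≤ b → b ≤ T →
      g b ≤ g a * Real.exp (CP * (b - a)) := by
    intro a b ha hab hb
    apply gronwall_creep hab hCP.le
    · intro t htab
      exact h0 t ⟨ha.trans htab.1, htab.2.trans hb⟩
    · exact hcl a b ha hb
    · intro t htab δ hδ
      obtain ⟨η, hη, hst⟩ := hstepR t ⟨ha.trans htab.1, (htab.2.le).trans hb⟩
        (lt_of_lt_of_le htab.2 hb) δ hδ
      exact ⟨η, hη, fun s h1 h2 h3 => hst s h1 (h2.trans hb) h3⟩
  have boundB : ∀ a b : ℝ, 0 ≤ a → a ≤ b → b ≤ T →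
      g a ≤ g b * Real.exp (CP * (b - a)) := by
    intro a b ha hab hb
    have key : g (a + b - b) ≤ g (a + b - a) * Real.exp (CP * (b - a)) := by
      apply gronwall_creep (g := fun t => g (a + b - t)) hab hCP.le
      · intro t htab
        exact h0 _ ⟨by linarith [htab.2, ha], by linarith [htab.1, hb]⟩
      · intro B hB
        have heq : {t | t ∈ Icc a b ∧ g (a + b - t) ≤ B t}
            = (fun t : ℝ => a + b - t) ⁻¹' {t | t ∈ Icc a b ∧ g t ≤ B (a + b - t)} := by
          ext t
          simp only [mem_setOf_eq, mem_preimage, mem_Icc]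
          constructor
          · rintro ⟨⟨h1, h2⟩, h3⟩
            refine ⟨⟨by linarith, by linarith⟩, ?_⟩
            rw [show a + b - (a + b - t) = t by ring]
            exact h3
          · rintro ⟨⟨h1, h2⟩, h3⟩
            rw [show a + b - (a + b - t) = t by ring] at h3
            exact ⟨⟨by linarith, by linarith⟩, h3⟩
        rw [heq]
        exact (hcl a b ha hb _ (hB.comp (by fun_prop))).preimage (by fun_prop)
      · intro t htab δ hδ
        have ht' : a + b - t ∈ Icc (0:ℝ) T := ⟨by linarith [htab.2, ha], by linarith [htab.1, hb]⟩
        have ht'0 : 0 < a + b - t := by linarith [htab.2, ha]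
        obtain ⟨η, hη, hst⟩ := hstepL (a + b - t) ht' ht'0 δ hδ
        refine ⟨η, hη, fun s h1 h2 h3 => ?_⟩
        have := hst (a + b - s) (by linarith) (by linarith) (by linarith)
        rw [show a + b - t - (a + b - s) = s - t by ring] at this
        exact this
    rw [show a + b - b = a by ring, show a + b - a = b by ring] at key
    exact key
  -- global bound
  have hg00 : 0 ≤ g 0 := h0 0 ⟨le_refl 0, hT.le⟩
  set G : ℝ := g 0 * Real.exp (CP * T) with hG
  have hGb : ∀ t ∈ Icc (0:ℝ) T, g t ≤ G := by
    intro t ht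
    have h1 := boundF 0 t le_rfl ht.1 ht.2
    have h2 : Real.exp (CP * (t - 0)) ≤ Real.exp (CP * T) :=
      Real.exp_le_exp.2 (by nlinarith [ht.1, ht.2])
    calc g t ≤ g 0 * Real.exp (CP * (t - 0)) := h1
    _ ≤ G := by rw [hG]; exact mul_le_mul_of_nonneg_left h2 hg00
  have hG0 : 0 ≤ G := mul_nonneg hg00 (Real.exp_pos _).le
  set Lr : ℝ := CP * G * Real.exp (CP * T) with hLr
  have hLr0 : 0 ≤ Lr := mul_nonneg (mul_nonneg hCP.le hG0) (Real.exp_pos _).le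
  have hKey : ∀ a b : ℝ, 0 ≤ a → a ≤ b → b ≤ T → |f b - f a| ≤ Lr * (b - a) := by
    intro a b ha hab hb
    have hFa := boundF a b ha hab hb
    have hBa := boundB a b ha hab hb
    have hga : g a ≤ G := hGb a ⟨ha, hab.trans hb⟩
    have hgb : g b ≤ G := hGb b ⟨ha.trans hab, hb⟩
    have hga0 : 0 ≤ g a := h0 a ⟨ha, hab.trans hb⟩
    have hgb0 : 0 ≤ g b := h0 b ⟨ha.trans hab, hb⟩
    set x : ℝ := CP * (b - a) with hx
    have hx0 : 0 ≤ x := mul_nonneg hCP.le (by linarith)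
    have hexp1 : Real.exp x - 1 ≤ x * Real.exp x := by
      have h1 : 1 - x ≤ Real.exp (-x) := by linarith [Real.add_one_le_exp (-x)]
      have h2 : (1 - x) * Real.exp x ≤ Real.exp (-x) * Real.exp x :=
        mul_le_mul_of_nonneg_right h1 (Real.exp_pos x).le
      rw [← Real.exp_add, neg_add_cancel, Real.exp_zero] at h2
      nlinarith
    have hexp2 : Real.exp x ≤ Real.exp (CP * T) :=
      Real.exp_le_exp.2 (by rw [hx]; nlinarith)
    have hexpm : Real.exp x - 1 ≤ x * Real.exp (CP * T) := by
      nlinarith [Real.exp_pos x]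
    have h5 : G * (x * Real.exp (CP * T)) = Lr * (b - a) := by rw [hLr, hx]; ring
    have hub : g b - g a ≤ Lr * (b - a) := by
      have h3 : g a * (Real.exp x - 1) ≤ g a * (x * Real.exp (CP * T)) :=
        mul_le_mul_of_nonneg_left hexpm hga0
      have h4 : g a * (x * Real.exp (CP * T)) ≤ G * (x * Real.exp (CP * T)) :=
        mul_le_mul_of_nonneg_right hga (mul_nonneg hx0 (Real.exp_pos _).le)
      nlinarith [hFa]
    have hlb : g a - g b ≤ Lr * (b - a) := by
      have h3 : g b * (Real.exp x - 1) ≤ g b * (x * Real.exp (CP * T)) :=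
        mul_le_mul_of_nonneg_left hexpm hgb0
      have h4 : g b * (x * Real.exp (CP * T)) ≤ G * (x * Real.exp (CP * T)) :=
        mul_le_mul_of_nonneg_right hgb (mul_nonneg hx0 (Real.exp_pos _).le)
      nlinarith [hBa]
    have habs2 : |g b - g a| ≤ Lr * (b - a) := abs_le.2 ⟨by linarith, by linarith⟩
    have heq : g b - g a = f b - f a := by simp only [hgdef]; ring
    rwa [heq] at habs2
  set L : NNReal := Real.toNNReal Lr with hLdef
  have hLcoe : (L : ℝ) = Lr := Real.coe_toNNReal _ hLr0
  have hLip : LipschitzOnWith L f (Icc 0 T) := by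
    apply LipschitzOnWith.of_dist_le_mul
    intro x hx y hy
    rw [Real.dist_eq, Real.dist_eq, hLcoe]
    rcases le_total x y with hxy | hxy
    · rw [abs_sub_comm (f x), abs_sub_comm x, abs_of_nonneg (by linarith : (0:ℝ) ≤ y - x)]
      exact hKey x y hx.1 hxy hy.2
    · rw [abs_of_nonneg (by linarith : (0:ℝ) ≤ x - y)]
      exact hKey y x hy.1 hxy hx.2
  -- extension h of f, Lipschitz on all of ℝ
  set clamp : ℝ → ℝ := fun s => max (min s T) 0 with hclampdef
  have hclampLip : LipschitzWith 1 clamp := (LipschitzWith.id.min_const T).max_const 0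
  set h : ℝ → ℝ := fun s => f (clamp s) with hhdef
  have hmaps : MapsTo clamp univ (Icc (0:ℝ) T) := by
    intro s _
    exact ⟨le_max_right _ _, max_le (min_le_right _ _) hT.le⟩
  have hhLip : LipschitzWith (L * 1) h := by
    rw [← lipschitzOnWith_univ]
    exact hLip.comp (lipschitzOnWith_univ.2 hclampLip) hmaps
  have hclamp_eq : ∀ s ∈ Icc (0:ℝ) T, h s = f s := by
    intro s hs
    simp only [hhdef, hclampdef, min_eq_left hs.2, max_eq_left hs.1]
  -- Part 2 : a.e. derivative equals the power
  have part2 : ∀ᵐ t ∂(volume.restrict (Ioo (0:ℝ) T)), HasDerivAt f (P t u) t := by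
    have hae : ∀ᵐ t ∂(volume.restrict (Ioo (0:ℝ) T)), DifferentiableAt ℝ h t :=
      ae_restrict_of_ae hhLip.ae_differentiableAt
    have hmem : ∀ᵐ t ∂(volume.restrict (Ioo (0:ℝ) T)), t ∈ Ioo (0:ℝ) T :=
      ae_restrict_mem measurableSet_Ioo
    filter_upwards [hae, hmem] with t hdiff ht
    have heqnhds : f =ᶠ[𝓝 t] h := by
      filter_upwards [Ioo_mem_nhds ht.1 ht.2] with z hz
      exact (hclamp_eq z ⟨hz.1.le, hz.2.le⟩).symm
    have hdf : DifferentiableAt ℝ f t := by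
      rw [heqnhds.differentiableAt_iff]
      exact hdiff
    have hD : HasDerivAt f (deriv f t) t := hdf.hasDerivAt
    have hslope : Tendsto (slope f t) (𝓝[≠] t) (𝓝 (deriv f t)) :=
      hasDerivAt_iff_tendsto_slope.1 hD
    have htmem : t ∈ Icc (0:ℝ) T := ⟨ht.1.le, ht.2.le⟩
    obtain ⟨hlinf, hlsup, -⟩ := hE2' t htmem u
    have hfun1 : (fun s => (((E t u - E s u) / (t - s) : ℝ) : EReal))
        = fun s => ((slope f t s : ℝ) : EReal) := by
      funext z
      rw [slope_def_field, show E t u - E z u = -(f z - f t) by simp only [hf]; ring,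
        show t - z = -(z - t) by ring, neg_div_neg_eq]
    have hfun2 : (fun s => (((E s u - E t u) / (s - t) : ℝ) : EReal))
        = fun s => ((slope f t s : ℝ) : EReal) := by
      funext z
      rw [slope_def_field]
    rw [hfun1] at hlinf
    rw [hfun2] at hlsup
    have hne1 : (𝓝[Ico (0:ℝ) t] t).NeBot := by
      apply mem_closure_iff_nhdsWithin_neBot.1
      rw [closure_Ico ht.1.ne]
      exact ⟨ht.1.le, le_refl t⟩
    have hne2 : (𝓝[Ioc t T] t).NeBot := by
      apply mem_closure_iff_nhdsWithin_neBot.1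
      rw [closure_Ioc ht.2.ne]
      exact ⟨le_refl t, ht.2.le⟩
    have hlef : 𝓝[Ico (0:ℝ) t] t ≤ 𝓝[≠] t :=
      nhdsWithin_mono t (fun z hz => ne_of_lt hz.2)
    have href : 𝓝[Ioc t T] t ≤ 𝓝[≠] t :=
      nhdsWithin_mono t (fun z hz => ne_of_gt hz.1)
    have ht1 : Tendsto (fun z => ((slope f t z : ℝ) : EReal)) (𝓝[Ico (0:ℝ) t] t)
        (𝓝 ((deriv f t : ℝ) : EReal)) :=
      EReal.tendsto_coe.2 (hslope.mono_left hlef)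
    have ht2 : Tendsto (fun z => ((slope f t z : ℝ) : EReal)) (𝓝[Ioc t T] t)
        (𝓝 ((deriv f t : ℝ) : EReal)) :=
      EReal.tendsto_coe.2 (hslope.mono_left href)
    haveI := hne1; haveI := hne2
    have e1 : (P t u : EReal) ≤ ((deriv f t : ℝ) : EReal) := by
      rw [← ht1.liminf_eq]; exact hlinf
    have e2 : ((deriv f t : ℝ) : EReal) ≤ (P t u : EReal) := by
      rw [← ht2.limsup_eq]; exact hlsup
    have hdP : deriv f t = P t u := by exact_mod_cast le_antisymm e2 e1
    rw [← hdP]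
    exact hD
  refine ⟨⟨L, hLip⟩, part2, ?_⟩
  -- Part 3 : fundamental theorem of calculus
  intro s t hs hst htT
  rcases eq_or_lt_of_le hst with rfl | hlt
  · simp
  have hsub2 : Ioo s t ⊆ Ioo 0 T := Ioo_subset_Ioo hs htT
  have key : ∀ᵐ r ∂(volume.restrict (Ioo s t)), HasDerivAt f (P r u) r :=
    ae_restrict_of_ae_restrict_of_subset hsub2 part2
  have key2 : ∀ᵐ r ∂(volume : Measure ℝ), r ∈ Ioo s t → deriv h r = P r u := by
    rw [← ae_restrict_iff' measurableSet_Ioo]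
    filter_upwards [key, ae_restrict_mem measurableSet_Ioo] with r hr hrm
    have hrm' := hsub2 hrm
    have heqnhds : h =ᶠ[𝓝 r] f := by
      filter_upwards [Ioo_mem_nhds hrm'.1 hrm'.2] with z hz
      exact hclamp_eq z ⟨hz.1.le, hz.2.le⟩
    have : HasDerivAt h (P r u) r := hr.congr_of_eventuallyEq heqnhds
    exact this.deriv
  have hnt : ∀ᵐ r ∂(volume : Measure ℝ), r ≠ t := by
    have h0' : (volume : Measure ℝ) {t} = 0 := measure_singleton t
    rw [ae_iff]
    simpa [not_not] using h0'
  have hI : (∫ r in s..t, P r u) = ∫ r in s..t, deriv h r := by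
    apply intervalIntegral.integral_congr_ae
    filter_upwards [key2, hnt] with r h1 h2 hrI
    rw [uIoc_of_le hst] at hrI
    have hrmem : r ∈ Ioo s t := ⟨hrI.1, lt_of_le_of_ne hrI.2 h2⟩
    exact (h1 hrmem).symm
  have hftc := lipschitz_ftc hhLip s t
  rw [hI, hftc, hclamp_eq s ⟨hs, hst.trans htT⟩, hclamp_eq t ⟨hs.trans hst, htT⟩]
  simp only [hf]
  ring

end
end

section
/- Assume the energy functional E satisfies conditions (E1) and (E2). Then for every μ > 0 the residual stability function R_μ is lower semicontinuous on [0,T] × X. -/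
open Filter MeasureTheory Topology Set
open scoped ENNReal

noncomputable section

variable {X : Type*} [MetricSpace X]

/-- From (E1): `E` is lower semicontinuous on `[0,T] × X`. -/
lemma lscE_aux {X : Type*} [MetricSpace X] (T : ℝ) (E : ℝ → X → ℝ) (x₀ : X)
    (hE1 : CondE1 E T x₀) :
    LowerSemicontinuousOn (fun p : ℝ × X => E p.1 p.2) (Icc (0 : ℝ) T ×ˢ (univ : Set X)) := by
  rintro ⟨t, x⟩ ⟨ht, -⟩ a ha
  set C := max (a + dist x₀ x + 1) (E t x + dist x₀ x) with hC
  have hmem : (t, x) ∈ {p : ℝ × X | p.1 ∈ Icc 0 T ∧ E p.1 p.2 + dist x₀ p.2 ≤ C} :=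
    ⟨ht, le_max_right _ _⟩
  have hls := (hE1 C).1 (t, x) hmem a ha
  rw [eventually_nhdsWithin_iff] at hls
  have hd : ∀ᶠ q : ℝ × X in 𝓝 (t, x), dist x₀ q.2 < dist x₀ x + 1 := by
    have hcont : Tendsto (fun q : ℝ × X => dist x₀ q.2) (𝓝 (t, x)) (𝓝 (dist x₀ x)) :=
      ((continuous_const.dist continuous_snd).tendsto (t, x))
    exact hcont.eventually_lt_const (by linarith)
  rw [eventually_nhdsWithin_iff]
  filter_upwards [hls, hd] with q h1 h2 hq
  by_cases hK : E q.1 q.2 + dist x₀ q.2 ≤ C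
  · exact h1 ⟨hq.1, hK⟩
  · push_neg at hK
    have h3 : a + dist x₀ x + 1 ≤ C := le_max_left _ _
    linarith

/-- From (E2): `s ↦ E s y` is upper semicontinuous within `[0,T]` at each `t ∈ [0,T]`. -/
lemma uscT_aux {X : Type*} [MetricSpace X] (T : ℝ) (E P : ℝ → X → ℝ) (x₀ : X) (CP : ℝ)
    (hE2 : CondE2 E P T x₀ CP) (t : ℝ) (ht : t ∈ Icc (0 : ℝ) T) (y : X) {ε : ℝ} (hε : 0 < ε) :
    ∀ᶠ s in 𝓝[Icc (0 : ℝ) T] t, E s y < E t y + ε := by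
  obtain ⟨-, h⟩ := hE2
  obtain ⟨h1, h2, -⟩ := h t ht y
  have key : Icc (0 : ℝ) T ⊆ Ico 0 t ∪ (Ioc t T ∪ {t}) := by
    intro s hs
    rcases lt_trichotomy s t with hlt | heq | hgt
    · exact Or.inl ⟨hs.1, hlt⟩
    · exact Or.inr (Or.inr heq)
    · exact Or.inr (Or.inl ⟨hgt, hs.2⟩)
  refine Filter.Eventually.filter_mono (nhdsWithin_mono t key) ?_
  rw [nhdsWithin_union, nhdsWithin_union, eventually_sup, eventually_sup]
  have hPpos : (0 : ℝ) < |P t y| + 1 := by positivity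
  set δ : ℝ := ε / (|P t y| + 1) with hδdef
  have hδ : 0 < δ := by positivity
  refine ⟨?_, ?_, ?_⟩
  · -- left side
    have hlt : (((P t y - 1 : ℝ) : EReal)) <
        Filter.liminf (fun s => (((E t y - E s y) / (t - s) : ℝ) : EReal)) (𝓝[Ico 0 t] t) :=
      lt_of_lt_of_le (by exact_mod_cast (by linarith : P t y - 1 < P t y)) h1
    have hev := Filter.eventually_lt_of_lt_liminf hlt
    have habs : ∀ᶠ s in 𝓝[Ico 0 t] t, |s - t| < δ := by
      refine eventually_nhdsWithin_of_eventually_nhds ?_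
      have : Tendsto (fun s : ℝ => |s - t|) (𝓝 t) (𝓝 |t - t|) := by
        exact ((continuous_id.sub continuous_const).abs.tendsto t)
      simpa using this.eventually_lt_const (by simpa using hδ)
    have hmemI : ∀ᶠ s in 𝓝[Ico 0 t] t, s ∈ Ico 0 t := eventually_mem_nhdsWithin
    filter_upwards [hev, habs, hmemI] with s hs habs' hsI
    have hts : 0 < t - s := by linarith [hsI.2]
    have hs' : (P t y - 1 : ℝ) < (E t y - E s y) / (t - s) := by exact_mod_cast hs
    have hmul : (P t y - 1) * (t - s) < E t y - E s y := (lt_div_iff₀ hts).mp hs'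
    have habs2 : t - s < δ := by
      have : |s - t| = t - s := by rw [abs_sub_comm]; exact abs_of_pos hts
      linarith [this ▸ habs']
    have h6 : (1 - P t y) * (t - s) ≤ (|P t y| + 1) * (t - s) := by
      have := neg_le_abs (P t y)
      nlinarith
    have h7 : (|P t y| + 1) * (t - s) < (|P t y| + 1) * δ :=
      mul_lt_mul_of_pos_left habs2 hPpos
    have h8 : (|P t y| + 1) * δ = ε := by
      rw [hδdef]; field_simp
    nlinarith
  · -- right side
    have hlt : Filter.limsup (fun s => (((E s y - E t y) / (s - t) : ℝ) : EReal)) (𝓝[Ioc t T] t)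
        < (((P t y + 1 : ℝ) : EReal)) :=
      lt_of_le_of_lt h2 (by exact_mod_cast (by linarith : P t y < P t y + 1))
    have hev := Filter.eventually_lt_of_limsup_lt hlt
    have habs : ∀ᶠ s in 𝓝[Ioc t T] t, |s - t| < δ := by
      refine eventually_nhdsWithin_of_eventually_nhds ?_
      have : Tendsto (fun s : ℝ => |s - t|) (𝓝 t) (𝓝 |t - t|) := by
        exact ((continuous_id.sub continuous_const).abs.tendsto t)
      simpa using this.eventually_lt_const (by simpa using hδ)
    have hmemI : ∀ᶠ s in 𝓝[Ioc t T] t, s ∈ Ioc t T := eventually_mem_nhdsWithin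
    filter_upwards [hev, habs, hmemI] with s hs habs' hsI
    have hts : 0 < s - t := by linarith [hsI.1]
    have hs' : (E s y - E t y) / (s - t) < P t y + 1 := by exact_mod_cast hs
    have hmul : E s y - E t y < (P t y + 1) * (s - t) := (div_lt_iff₀ hts).mp hs'
    have habs2 : s - t < δ := by
      have : |s - t| = s - t := abs_of_pos hts
      linarith [this ▸ habs']
    have h6 : (P t y + 1) * (s - t) ≤ (|P t y| + 1) * (s - t) := by
      have := le_abs_self (P t y)
      nlinarith
    have h7 : (|P t y| + 1) * (s - t) < (|P t y| + 1) * δ :=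
      mul_lt_mul_of_pos_left habs2 hPpos
    have h8 : (|P t y| + 1) * δ = ε := by
      rw [hδdef]; field_simp
    nlinarith
  · -- at the point
    rw [nhdsWithin_singleton, eventually_pure]
    linarith

theorem statement3
    {X : Type*} [MetricSpace X] [CompleteSpace X]
    (T : ℝ) (hT : 0 < T) (E P : ℝ → X → ℝ) (x₀ : X) (CP : ℝ)
    (hE1 : CondE1 E T x₀) (hE2 : CondE2 E P T x₀ CP)
    (μ : ℝ) (hμ : 0 < μ) :
    LowerSemicontinuousOn (fun p : ℝ × X => Rmu E μ p.1 p.2)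
      (Icc (0 : ℝ) T ×ˢ (univ : Set X)) := by
  rintro ⟨t, x⟩ ⟨ht, -⟩ c hc
  unfold Rmu at hc
  obtain ⟨y, hy⟩ := lt_iSup_iff.mp hc
  have hctop : c ≠ ⊤ := (hy.trans ENNReal.ofReal_lt_top).ne
  have ha : c.toReal < E t x - E t y - Dmu μ x y :=
    (ENNReal.lt_ofReal_iff_toReal_lt hctop).mp hy
  set a : ℝ := c.toReal with hadef
  set ε : ℝ := (E t x - E t y - Dmu μ x y - a) / 4 with hεdef
  have hε : 0 < ε := by rw [hεdef]; linarith
  -- (1) lsc of E at (t,x)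
  have h₁ : ∀ᶠ q : ℝ × X in 𝓝[Icc (0 : ℝ) T ×ˢ (univ : Set X)] (t, x),
      E t x - ε < E q.1 q.2 :=
    lscE_aux T E x₀ hE1 (t, x) ⟨ht, mem_univ x⟩ (E t x - ε) (by linarith)
  -- (2) usc of s ↦ E s y, pulled back along fst
  have htend : Tendsto (Prod.fst : ℝ × X → ℝ)
      (𝓝[Icc (0 : ℝ) T ×ˢ (univ : Set X)] (t, x)) (𝓝[Icc (0 : ℝ) T] t) := by
    apply tendsto_nhdsWithin_of_tendsto_nhds_of_eventually_within
    · exact (continuous_fst.tendsto (t, x)).mono_left nhdsWithin_le_nhds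
    · filter_upwards [eventually_mem_nhdsWithin] with q hq
      exact hq.1
  have h₂ : ∀ᶠ q : ℝ × X in 𝓝[Icc (0 : ℝ) T ×ˢ (univ : Set X)] (t, x),
      E q.1 y < E t y + ε :=
    htend.eventually (uscT_aux T E P x₀ CP hE2 t ht y hε)
  -- (3) continuity of q ↦ Dmu μ q.2 y
  have h₃ : ∀ᶠ q : ℝ × X in 𝓝[Icc (0 : ℝ) T ×ˢ (univ : Set X)] (t, x),
      Dmu μ q.2 y < Dmu μ x y + ε := by
    have hcont : Continuous fun q : ℝ × X => Dmu μ q.2 y := by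
      unfold Dmu
      exact (continuous_snd.dist continuous_const).add
        (continuous_const.mul ((continuous_snd.dist continuous_const).pow 2))
    exact ((hcont.tendsto (t, x)).mono_left nhdsWithin_le_nhds).eventually_lt_const
      (by linarith)
  filter_upwards [h₁, h₂, h₃] with q hq1 hq2 hq3
  refine lt_of_lt_of_le ?_
    (le_iSup (fun z => ENNReal.ofReal (E q.1 q.2 - E q.1 z - Dmu μ q.2 z)) y)
  rw [ENNReal.lt_ofReal_iff_toReal_lt hctop]
  rw [← hadef] at *
  linarith

end
end

section
/- (Duality formula for the generalized Moreau–Yosida approximation.) Assume the energy functional E satisfies condition (E1). Let ψ : [0,∞) → [0,∞) be convex, lower semicontinuous, with ψ(0) = 0 and ψ(r)/r → ∞ as r → ∞, and let ψ*(s) := sup_{r≥0} (s·r − ψ(r)) be its conjugate. Define the generalized Moreau–Yosida approximation Y_τ^ψ(E)(t,u) := inf_{v∈X} [ τ·ψ(d(u,v)/τ) + E(t,v) ] for τ > 0. Then for every (t,u) ∈ [0,T] × X: ψ*(|DE|(t,u)) = limsup_{τ↓0} (E(t,u) − Y_τ^ψ(E)(t,u))/τ. -/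
open Filter MeasureTheory Topology Set
open scoped ENNReal

noncomputable section

variable {X : Type*} [MetricSpace X]

/-- The conjugate `ψ*(s) = sup_{r ≥ 0} (s·r − ψ(r))` of a nonnegative dissipation potential,
extended to `ℝ≥0∞`. -/
def psiStar (ψ : ℝ → ℝ) (s : ℝ≥0∞) : ℝ≥0∞ :=
  ⨆ (r : ℝ) (_ : 0 ≤ r), (s * ENNReal.ofReal r - ENNReal.ofReal (ψ r))

/-- The generalized Moreau–Yosida approximation `Y_τ^ψ(E)(t,u)`. -/
def MYosida {X : Type*} [MetricSpace X] (E : ℝ → X → ℝ) (ψ : ℝ → ℝ) (τ t : ℝ) (u : X) : ℝ :=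
  sInf {v : ℝ | ∃ w : X, v = τ * ψ (dist u w / τ) + E t w}

/-!
Testing the infimum defining `Y_τ` with points `v → u` at the scale `τ = d(u,v)/r` gives
`(E(u) - Y_τ(u))/τ ≥ r · (E(u) - E(v))/d(u,v) - ψ(r)`, whence `ψ*(|DE|) ≤ limsup`.
Conversely, the coercivity coming from (E1) and the superlinearity of `ψ` force the
almost-minimizers `w` of `Y_τ(u)` to converge to `u` as `τ ↓ 0`. Near `u` the slope bounds
`E(u) - E(w)` by `(|DE| + ε) d(u,w)`, so `(E(u) - Y_τ(u))/τ ≤ ψ*(|DE| + ε) + ε`, and `ψ*` is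
continuous from the right at finite arguments because superlinearity confines its supremum to a
bounded range of `r`.
-/

lemma exists_forall_mul_sub_le_of_tendsto_div_atTop {ψ : ℝ → ℝ}
    (hψnn : ∀ r : ℝ, 0 ≤ r → 0 ≤ ψ r) (hψsuper : Tendsto (fun r => ψ r / r) atTop atTop)
    (a : ℝ) : ∃ b : ℝ, 0 ≤ b ∧ ∀ r : ℝ, 0 ≤ r → a * r - b ≤ ψ r := by
  obtain ⟨R, hR⟩ := eventually_atTop.1 (hψsuper.eventually_ge_atTop a)
  refine ⟨|a| * max R 1, by positivity, fun r hr => ?_⟩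
  rcases le_or_gt r (max R 1) with hrR | hrR
  · have : a * r ≤ |a| * max R 1 :=
      (mul_le_mul_of_nonneg_right (le_abs_self a) hr).trans
        (mul_le_mul_of_nonneg_left hrR (abs_nonneg a))
    linarith [hψnn r hr]
  · have hr0 : 0 < r := zero_lt_one.trans_le (le_max_right R 1) |>.trans hrR
    have : a * r ≤ ψ r := (le_div_iff₀ hr0).1 (hR r ((le_max_left R 1).trans hrR.le))
    linarith [show 0 ≤ |a| * max R 1 by positivity]

namespace ENNReal

lemma ofReal_mul_sub_ofReal {s r y : ℝ} (hr : 0 ≤ r) (hy : 0 ≤ y) :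
    ENNReal.ofReal s * ENNReal.ofReal r - ENNReal.ofReal y = ENNReal.ofReal (s * r - y) := by
  rw [ENNReal.ofReal_sub _ hy, ENNReal.ofReal_mul' hr]

end ENNReal

section Conjugate

variable {ψ : ℝ → ℝ}

lemma psiStar_top : psiStar ψ ⊤ = ⊤ :=
  top_unique <| le_iSup₂_of_le 1 zero_le_one <| by simp

lemma ofReal_mul_sub_le_psiStar (hψnn : ∀ r : ℝ, 0 ≤ r → 0 ≤ ψ r) (s : ℝ) {r : ℝ} (hr : 0 ≤ r) :
    ENNReal.ofReal (s * r - ψ r) ≤ psiStar ψ (ENNReal.ofReal s) := by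
  rw [← ENNReal.ofReal_mul_sub_ofReal hr (hψnn r hr)]
  exact le_iSup₂ (f := fun r (_ : 0 ≤ r) =>
    ENNReal.ofReal s * ENNReal.ofReal r - ENNReal.ofReal (ψ r)) r hr

/-- Right continuity of `ψ*` at a finite `s`: for `r > b` the bracket `(s + ε) r - ψ r` is negative,
and for `r ≤ b` raising the slope by `ε` raises it by at most `ε b`. -/
lemma exists_pos_forall_ofReal_add_mul_sub_le_psiStar (hψnn : ∀ r : ℝ, 0 ≤ r → 0 ≤ ψ r)
    (hψsuper : Tendsto (fun r => ψ r / r) atTop atTop) (s : ℝ) {η : ℝ} (hη : 0 < η) :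
    ∃ ε > 0, ∀ r : ℝ, 0 ≤ r →
      ENNReal.ofReal ((s + ε) * r - ψ r) ≤ psiStar ψ (ENNReal.ofReal s) + ENNReal.ofReal η := by
  obtain ⟨b, hb, hψb⟩ := exists_forall_mul_sub_le_of_tendsto_div_atTop hψnn hψsuper (s + 2)
  set ε := min 1 (η / (b + 1)) with hε
  refine ⟨ε, by positivity, fun r hr => ?_⟩
  rcases le_or_gt r b with hrb | hrb
  · have hεr : ε * r ≤ η :=
      calc ε * r ≤ η / (b + 1) * (b + 1) := mul_le_mul (min_le_right _ _) (by linarith) hr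
              (by positivity)
        _ = η := div_mul_cancel₀ _ (by positivity)
    calc ENNReal.ofReal ((s + ε) * r - ψ r)
        ≤ ENNReal.ofReal (s * r - ψ r) + ENNReal.ofReal (ε * r) := by
          rw [add_mul, add_sub_right_comm]
          exact ENNReal.ofReal_add_le
      _ ≤ psiStar ψ (ENNReal.ofReal s) + ENNReal.ofReal η :=
          add_le_add (ofReal_mul_sub_le_psiStar hψnn s hr) (ENNReal.ofReal_le_ofReal hεr)
  · have hε1 : ε ≤ 1 := min_le_left _ _
    have : (s + ε) * r - ψ r ≤ 0 := by nlinarith [hψb r hr]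
    rw [ENNReal.ofReal_of_nonpos this]
    exact zero_le

end Conjugate

section MoreauYosida

variable {E : ℝ → X → ℝ} {ψ : ℝ → ℝ} {t τ : ℝ} {u : X}

lemma CondE1.exists_forall_le_add_dist {T : ℝ} {x₀ : X} (hE1 : CondE1 E T x₀)
    (ht : t ∈ Icc (0 : ℝ) T) : ∃ m : ℝ, ∀ w : X, m ≤ E t w + dist x₀ w := by
  set C := E t x₀ + dist x₀ x₀
  obtain ⟨hlsc, hcpt⟩ := hE1 C
  have hF : LowerSemicontinuousOn (fun p : ℝ × X => E p.1 p.2 + dist x₀ p.2)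
      {p : ℝ × X | p.1 ∈ Icc 0 T ∧ E p.1 p.2 + dist x₀ p.2 ≤ C} :=
    hlsc.add ((continuous_const.dist continuous_snd).lowerSemicontinuous.lowerSemicontinuousOn _)
  obtain ⟨m, hm⟩ := hF.bddBelow_of_isCompact hcpt
  refine ⟨min m C, fun w => ?_⟩
  rcases le_or_gt (E t w + dist x₀ w) C with h | h
  · exact (min_le_left _ _).trans (hm ⟨(t, w), ⟨ht, h⟩, rfl⟩)
  · exact (min_le_right _ _).trans h.le

lemma bddBelow_myosida {m : ℝ} {x₀ : X} (hm : ∀ w : X, m ≤ E t w + dist x₀ w)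
    (hψnn : ∀ r : ℝ, 0 ≤ r → 0 ≤ ψ r) (hψsuper : Tendsto (fun r => ψ r / r) atTop atTop)
    (hτ : 0 < τ) : BddBelow {v : ℝ | ∃ w : X, v = τ * ψ (dist u w / τ) + E t w} := by
  obtain ⟨b, -, hψb⟩ := exists_forall_mul_sub_le_of_tendsto_div_atTop hψnn hψsuper 1
  refine ⟨m - dist x₀ u - τ * b, ?_⟩
  rintro v ⟨w, rfl⟩
  have hψw := mul_le_mul_of_nonneg_left (hψb _ (by positivity : 0 ≤ dist u w / τ)) hτ.le
  rw [mul_sub, one_mul, mul_div_cancel₀ _ hτ.ne'] at hψw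
  linarith [hm w, dist_triangle x₀ u w]

lemma myosida_le (hbdd : BddBelow {v : ℝ | ∃ w : X, v = τ * ψ (dist u w / τ) + E t w})
    (w : X) : MYosida E ψ τ t u ≤ τ * ψ (dist u w / τ) + E t w :=
  csInf_le hbdd ⟨w, rfl⟩

lemma exists_lt_myosida_add {c : ℝ} (hc : 0 < c) :
    ∃ w : X, τ * ψ (dist u w / τ) + E t w < MYosida E ψ τ t u + c := by
  obtain ⟨_, ⟨w, rfl⟩, hw⟩ :=
    exists_lt_of_csInf_lt (s := {v : ℝ | ∃ w : X, v = τ * ψ (dist u w / τ) + E t w}) ⟨_, u, rfl⟩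
      (lt_add_of_pos_right (MYosida E ψ τ t u) hc)
  exact ⟨w, hw⟩

lemma sub_div_sub_le_sub_myosida_div
    (hbdd : BddBelow {v : ℝ | ∃ w : X, v = τ * ψ (dist u w / τ) + E t w}) (hτ : 0 < τ) (w : X) :
    (E t u - E t w) / τ - ψ (dist u w / τ) ≤ (E t u - MYosida E ψ τ t u) / τ := by
  have : (E t u - E t w) / τ - ψ (dist u w / τ)
      = (E t u - (τ * ψ (dist u w / τ) + E t w)) / τ := by
    field_simp
    ring
  rw [this]
  gcongr
  exact myosida_le hbdd w

/-- Superlinearity gives `τ ψ(d/τ) ≥ a d - b τ` with `a` as large as we like, while the lower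
bound on `E(w) + d(x₀,w)` only costs `d = d(u,w)`; so the budget `E(u) + cτ` forces `d` small. -/
lemma eventually_forall_dist_lt_of_le_add {m c δ : ℝ} {x₀ : X}
    (hm : ∀ w : X, m ≤ E t w + dist x₀ w) (hψnn : ∀ r : ℝ, 0 ≤ r → 0 ≤ ψ r)
    (hψsuper : Tendsto (fun r => ψ r / r) atTop atTop) (hδ : 0 < δ) :
    ∀ᶠ τ in 𝓝[>] (0 : ℝ), ∀ w : X,
      τ * ψ (dist u w / τ) + E t w ≤ E t u + c * τ → dist u w < δ := by
  set C := E t u + dist x₀ u - m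
  have hC : 0 ≤ C := by linarith [hm u]
  obtain ⟨b, -, hψb⟩ :=
    exists_forall_mul_sub_le_of_tendsto_div_atTop hψnn hψsuper (1 + (C + 1) / δ)
  have hsmall : ∀ᶠ τ in 𝓝[>] (0 : ℝ), (b + c) * τ < 1 := by
    have : Tendsto (fun τ : ℝ => (b + c) * τ) (𝓝 0) (𝓝 0) := by
      simpa using (continuous_const_mul (b + c)).tendsto 0
    exact (this.mono_left nhdsWithin_le_nhds).eventually (gt_mem_nhds one_pos)
  filter_upwards [hsmall, self_mem_nhdsWithin] with τ hτc (hτ : 0 < τ) w hw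
  have hψw := mul_le_mul_of_nonneg_left (hψb _ (by positivity : 0 ≤ dist u w / τ)) hτ.le
  rw [mul_sub, mul_left_comm, mul_div_cancel₀ _ hτ.ne'] at hψw
  have : (C + 1) / δ * dist u w < C + 1 := by linarith [hm w, dist_triangle x₀ u w]
  rw [div_mul_eq_mul_div, div_lt_iff₀ hδ] at this
  exact lt_of_mul_lt_mul_left this (by linarith)

lemma exists_pos_forall_dist_lt_sub_le_of_slopeE_lt {c : ℝ}
    (h : slopeE E t u < ENNReal.ofReal c) :
    ∃ δ > 0, ∀ v : X, dist u v < δ → E t u - E t v ≤ c * dist u v := by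
  obtain ⟨δ, hδ, hball⟩ :=
    Metric.eventually_nhds_iff.1 (eventually_nhdsWithin_iff.1 (eventually_lt_of_limsup_lt h))
  refine ⟨δ, hδ, fun v hv => ?_⟩
  rcases eq_or_ne v u with rfl | hvu
  · simp
  have hq := (ENNReal.ofReal_lt_ofReal_iff'.1 (hball (by rwa [dist_comm]) hvu)).1
  exact ((div_lt_iff₀ (dist_pos.2 hvu.symm)).1 hq).le

lemma psiStar_slopeE_le_limsup (hψnn : ∀ r : ℝ, 0 ≤ r → 0 ≤ ψ r)
    (hbdd : ∀ τ : ℝ, 0 < τ → BddBelow {v : ℝ | ∃ w : X, v = τ * ψ (dist u w / τ) + E t w}) :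
    psiStar ψ (slopeE E t u) ≤
      limsup (fun τ => ENNReal.ofReal ((E t u - MYosida E ψ τ t u) / τ)) (𝓝[>] (0 : ℝ)) := by
  refine iSup₂_le fun r hr => ?_
  rcases hr.eq_or_lt with rfl | hr
  · simp
  have hscale : Tendsto (fun v => dist u v / r) (𝓝[≠] u) (𝓝[>] (0 : ℝ)) := by
    have h0 : Tendsto (fun v => dist u v / r) (𝓝 u) (𝓝 (dist u u / r)) :=
      ((continuous_const.dist continuous_id).div_const r).tendsto u
    rw [dist_self, zero_div] at h0
    exact tendsto_nhdsWithin_iff.2 ⟨h0.mono_left nhdsWithin_le_nhds,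
      eventually_nhdsWithin_of_forall fun v hv => div_pos (dist_pos.2 (Ne.symm hv)) hr⟩
  calc slopeE E t u * ENNReal.ofReal r - ENNReal.ofReal (ψ r)
      = limsup (fun v => ENNReal.ofReal ((E t u - E t v) / dist u v) * ENNReal.ofReal r
          - ENNReal.ofReal (ψ r)) (𝓝[≠] u) := by
        rw [ENNReal.limsup_sub_const, ENNReal.limsup_mul_const_of_ne_top ENNReal.ofReal_ne_top,
          mul_comm]
        rfl
    _ ≤ limsup ((fun τ => ENNReal.ofReal ((E t u - MYosida E ψ τ t u) / τ)) ∘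
          fun v => dist u v / r) (𝓝[≠] u) := by
        refine limsup_le_limsup (eventually_nhdsWithin_of_forall fun v hv => ?_)
        have hd : 0 < dist u v := dist_pos.2 (Ne.symm hv)
        have key := sub_div_sub_le_sub_myosida_div (hbdd _ (div_pos hd hr)) (div_pos hd hr) v
        rw [div_div_cancel₀ hd.ne', div_div_eq_mul_div] at key
        dsimp only [Function.comp_apply]
        rw [ENNReal.ofReal_mul_sub_ofReal hr.le (hψnn r hr.le), div_mul_eq_mul_div]
        exact ENNReal.ofReal_le_ofReal key
    _ ≤ _ := hscale.limsup_comp_le_limsup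

lemma limsup_le_psiStar_slopeE {m : ℝ} {x₀ : X} (hm : ∀ w : X, m ≤ E t w + dist x₀ w)
    (hψ0 : ψ 0 = 0) (hψnn : ∀ r : ℝ, 0 ≤ r → 0 ≤ ψ r)
    (hψsuper : Tendsto (fun r => ψ r / r) atTop atTop) :
    limsup (fun τ => ENNReal.ofReal ((E t u - MYosida E ψ τ t u) / τ)) (𝓝[>] (0 : ℝ)) ≤
      psiStar ψ (slopeE E t u) := by
  obtain hS | hS := eq_or_ne (slopeE E t u) ⊤
  · rw [hS, psiStar_top]
    exact le_top
  obtain ⟨s, hs0, hs⟩ : ∃ s : ℝ, 0 ≤ s ∧ slopeE E t u = ENNReal.ofReal s :=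
    ⟨_, ENNReal.toReal_nonneg, (ENNReal.ofReal_toReal hS).symm⟩
  rw [hs]
  refine ENNReal.le_of_forall_pos_le_add fun η hη _ => ?_
  have hη2 : (0 : ℝ) < η / 2 := by positivity
  obtain ⟨ε, hε, hψε⟩ := exists_pos_forall_ofReal_add_mul_sub_le_psiStar hψnn hψsuper s hη2
  obtain ⟨δ, hδ, hEδ⟩ := exists_pos_forall_dist_lt_sub_le_of_slopeE_lt (E := E) (t := t) (u := u)
    (c := s + ε) (hs ▸ ENNReal.ofReal_lt_ofReal_iff'.2 ⟨by linarith, by linarith⟩)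
  refine limsup_le_of_le (by isBoundedDefault) ?_
  filter_upwards [eventually_forall_dist_lt_of_le_add (c := η / 2) hm hψnn hψsuper hδ,
    self_mem_nhdsWithin] with τ hloc (hτ : 0 < τ)
  have hbdd := bddBelow_myosida (u := u) hm hψnn hψsuper hτ
  have hYu : MYosida E ψ τ t u ≤ E t u := by simpa [hψ0] using myosida_le hbdd u
  obtain ⟨w, hw⟩ := exists_lt_myosida_add (E := E) (t := t) (τ := τ) (u := u) (ψ := ψ) (mul_pos hη2 hτ)
  have hEw := hEδ w (hloc w (by linarith))
  have hρ : (s + ε) * (dist u w / τ) * τ = (s + ε) * dist u w := by field_simp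
  have key : (E t u - MYosida E ψ τ t u) / τ
      ≤ (s + ε) * (dist u w / τ) - ψ (dist u w / τ) + η / 2 := by
    rw [div_le_iff₀ hτ]
    linarith
  calc ENNReal.ofReal ((E t u - MYosida E ψ τ t u) / τ)
      ≤ ENNReal.ofReal ((s + ε) * (dist u w / τ) - ψ (dist u w / τ)) + ENNReal.ofReal (η / 2) :=
        (ENNReal.ofReal_le_ofReal key).trans ENNReal.ofReal_add_le
    _ ≤ psiStar ψ (ENNReal.ofReal s) + ENNReal.ofReal (η / 2) + ENNReal.ofReal (η / 2) := by
        gcongr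
        exact hψε _ (by positivity)
    _ = psiStar ψ (ENNReal.ofReal s) + η := by
        rw [add_assoc, ← ENNReal.ofReal_add hη2.le hη2.le, add_halves, ENNReal.ofReal_coe_nnreal]

end MoreauYosida

theorem statement14_general
    {X : Type*} [MetricSpace X]
    (T : ℝ) (E : ℝ → X → ℝ) (x₀ : X)
    (hE1 : CondE1 E T x₀)
    (ψ : ℝ → ℝ)
    (hψ0 : ψ 0 = 0) (hψnn : ∀ r : ℝ, 0 ≤ r → 0 ≤ ψ r)
    (hψsuper : Tendsto (fun r => ψ r / r) atTop atTop)
    (t : ℝ) (ht : t ∈ Icc (0 : ℝ) T) (u : X) :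
    Filter.limsup (fun τ => ENNReal.ofReal ((E t u - MYosida E ψ τ t u) / τ)) (𝓝[>] (0 : ℝ))
      = psiStar ψ (slopeE E t u) := by
  obtain ⟨m, hm⟩ := hE1.exists_forall_le_add_dist ht
  exact le_antisymm (limsup_le_psiStar_slopeE hm hψ0 hψnn hψsuper)
    (psiStar_slopeE_le_limsup hψnn fun τ hτ => bddBelow_myosida hm hψnn hψsuper hτ)

theorem statement14
    {X : Type*} [MetricSpace X] [CompleteSpace X]
    (T : ℝ) (hT : 0 < T) (E : ℝ → X → ℝ) (x₀ : X)
    (hE1 : CondE1 E T x₀)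
    (ψ : ℝ → ℝ) (hψconv : ConvexOn ℝ (Ici 0) ψ)
    (hψlsc : LowerSemicontinuousOn ψ (Ici 0))
    (hψ0 : ψ 0 = 0) (hψnn : ∀ r : ℝ, 0 ≤ r → 0 ≤ ψ r)
    (hψsuper : Tendsto (fun r => ψ r / r) atTop atTop)
    (t : ℝ) (ht : t ∈ Icc (0 : ℝ) T) (u : X) :
    Filter.limsup (fun τ => ENNReal.ofReal ((E t u - MYosida E ψ τ t u) / τ)) (𝓝[>] (0 : ℝ))
      = psiStar ψ (slopeE E t u) :=
  statement14_general T E x₀ hE1 ψ hψ0 hψnn hψsuper t ht u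

end
end

section
/- Assume the energy functional E satisfies conditions (E1), (E2) and (E3'). Let ψ : [0,∞) → [0,∞) be convex, lower semicontinuous, with ψ(0) = 0 and ψ(r)/r → ∞ as r → ∞, with conjugate ψ*(s) := sup_{r≥0}(s·r − ψ(r)), and let Y_τ^ψ(E)(t,u) := inf_{v∈X} [ τ·ψ(d(u,v)/τ) + E(t,v) ]. Let τ_k ↓ 0, t_k → t in [0,T] and u_k → u in X with sup_k E(t_k,u_k) ≤ C for some C. Then liminf_{k→∞} (E(t_k,u_k) − Y_{τ_k}^ψ(E)(t_k,u_k))/τ_k ≥ ψ*(|DE|(t,u)). -/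
open Filter MeasureTheory Topology Set
open scoped ENNReal

noncomputable section

variable {X : Type*} [MetricSpace X]

/-!
Fix `a < |DE|(t,u)` and `r > 0`, and let `w_k` minimise `E(t_k,·) + a·d(u_k,·)` over the closed
ball of radius `r τ_k` about `u_k`; it exists because (E1) makes the relevant sublevel sets
compact. If `w_k` lies on the boundary sphere, testing `Y_{τ_k}` with `w_k` gives
`(E(t_k,u_k) - Y_{τ_k}(t_k,u_k)) / τ_k ≥ a r - ψ(r)`. Otherwise `w_k` is a local minimiser, so
`|DE|(t_k,w_k) ≤ a`. But `w_k → u` with bounded energy, which Grönwall's inequality for (E2)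
transfers to time `0`, so (E3') allows this only for finitely many `k`. Taking the supremum over
`r` and `a` yields `ψ*(|DE|(t,u))`.
-/

open scoped NNReal

theorem upperSemicontinuousWithinAt_of_eventually_le_add_mul_abs {f : ℝ → ℝ} {s : Set ℝ}
    {x c : ℝ} (h : ∀ᶠ y in 𝓝[s] x, f y ≤ f x + c * |y - x|) :
    UpperSemicontinuousWithinAt f s x := by
  intro b hb
  have hbound : Tendsto (fun y => f x + c * |y - x|) (𝓝[s] x) (𝓝 (f x)) := by
    have : Continuous fun y => f x + c * |y - x| := by fun_prop
    simpa using (this.tendsto x).mono_left nhdsWithin_le_nhds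
  filter_upwards [h, hbound.eventually_lt_const hb] with y h₁ h₂ using h₁.trans_lt h₂

section TimeRegularity

variable {E P : ℝ → X → ℝ} {T : ℝ} {x₀ : X} {CP : ℝ}

theorem CondE2.energy_add_dist_nonneg (hE2 : CondE2 E P T x₀ CP) {s : ℝ} (hs : s ∈ Icc 0 T)
    (w : X) : 0 ≤ E s w + dist x₀ w := by
  have := (hE2.2 s hs w).2.2
  nlinarith [abs_nonneg (P s w), hE2.1]

theorem CondE2.eventually_le_add_mul_abs (hE2 : CondE2 E P T x₀ CP) {σ : ℝ}
    (hσ : σ ∈ Icc 0 T) (w : X) :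
    ∀ᶠ s in 𝓝[Icc 0 T] σ, E s w ≤ E σ w + (|P σ w| + 1) * |s - σ| := by
  obtain ⟨hleft, hright, -⟩ := hE2.2 σ hσ w
  have hsplit : Icc 0 T ⊆ Ico 0 σ ∪ ({σ} ∪ Ioc σ T) := fun s hs => by
    rcases lt_trichotomy s σ with h | rfl | h
    exacts [Or.inl ⟨hs.1, h⟩, Or.inr (Or.inl rfl), Or.inr (Or.inr ⟨h, hs.2⟩)]
  refine Eventually.filter_mono (nhdsWithin_mono σ hsplit) ?_
  rw [nhdsWithin_union, nhdsWithin_union, eventually_sup, eventually_sup, nhdsWithin_singleton,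
    eventually_pure]
  refine ⟨?_, by simp, ?_⟩
  · have hlt : ((-(|P σ w| + 1) : ℝ) : EReal) < P σ w := by
      exact_mod_cast (neg_abs_le _).trans_lt' (by linarith)
    filter_upwards [eventually_lt_of_lt_liminf (hlt.trans_le hleft), self_mem_nhdsWithin]
      with s hs hsσ
    have hpos : 0 < σ - s := sub_pos.2 hsσ.2
    rw [EReal.coe_lt_coe_iff, lt_div_iff₀ hpos] at hs
    rw [abs_of_neg (sub_neg.2 hsσ.2)]
    linarith
  · have hlt : (P σ w : EReal) < ((|P σ w| + 1 : ℝ) : EReal) := by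
      exact_mod_cast (le_abs_self _).trans_lt (by linarith)
    filter_upwards [eventually_lt_of_limsup_lt (hright.trans_lt hlt), self_mem_nhdsWithin]
      with s hs hsσ
    have hpos : 0 < s - σ := sub_pos.2 hsσ.1
    rw [EReal.coe_lt_coe_iff, div_lt_iff₀ hpos] at hs
    rw [abs_of_pos hpos]
    linarith

theorem CondE2.upperSemicontinuousWithinAt (hE2 : CondE2 E P T x₀ CP) {σ : ℝ}
    (hσ : σ ∈ Icc 0 T) (w : X) :
    UpperSemicontinuousWithinAt (fun s => E s w) (Icc 0 T) σ :=
  upperSemicontinuousWithinAt_of_eventually_le_add_mul_abs (hE2.eventually_le_add_mul_abs hσ w)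

/-- Upper semicontinuity keeps `(s, w)` in a sublevel set of `F` near `σ`, where (E1) applies. -/
theorem CondE1.lowerSemicontinuousWithinAt (hE1 : CondE1 E T x₀) (hE2 : CondE2 E P T x₀ CP)
    {σ : ℝ} (hσ : σ ∈ Icc 0 T) (w : X) :
    LowerSemicontinuousWithinAt (fun s => E s w) (Icc 0 T) σ := by
  set C := E σ w + 1 + dist x₀ w
  set S := {p : ℝ × X | p.1 ∈ Icc 0 T ∧ E p.1 p.2 + dist x₀ p.2 ≤ C}
  have hsub : ∀ᶠ s in 𝓝[Icc 0 T] σ, (s, w) ∈ S := by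
    filter_upwards [hE2.upperSemicontinuousWithinAt hσ w _ (lt_add_one _),
      self_mem_nhdsWithin] with s hs hsT
    exact ⟨hsT, by simp only [C]; linarith⟩
  have hmem : (σ, w) ∈ S := ⟨hσ, by simp only [C]; linarith⟩
  intro y hy
  have hmaps : Tendsto (fun s => (s, w)) (𝓝[Icc 0 T] σ) (𝓝[S] (σ, w)) :=
    tendsto_nhdsWithin_iff.2
      ⟨((continuous_id.prodMk continuous_const).tendsto σ).mono_left nhdsWithin_le_nhds, hsub⟩
  exact hmaps.eventually ((hE1 C).1 _ hmem y hy)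

theorem CondE1.continuousOn_time (hE1 : CondE1 E T x₀) (hE2 : CondE2 E P T x₀ CP) (w : X) :
    ContinuousOn (fun s => E s w) (Icc 0 T) := fun _ hσ =>
  continuousWithinAt_iff_lower_upperSemicontinuousWithinAt.2
    ⟨hE1.lowerSemicontinuousWithinAt hE2 hσ w, hE2.upperSemicontinuousWithinAt hσ w⟩

theorem CondE2.eventually_neg_lt_slope (hE2 : CondE2 E P T x₀ CP) {σ : ℝ} (hσ : σ ∈ Icc 0 T)
    (w : X) {r : ℝ} (hr : CP * (E σ w + dist x₀ w) < r) :
    ∀ᶠ s in 𝓝[Ico 0 σ] σ, -r < (E σ w - E s w) / (σ - s) := by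
  obtain ⟨hleft, -, hP⟩ := hE2.2 σ hσ w
  have hlt : ((-r : ℝ) : EReal) < P σ w := by
    exact_mod_cast (neg_abs_le _).trans_lt' (by linarith)
  filter_upwards [eventually_lt_of_lt_liminf (hlt.trans_le hleft)] with s hs
  exact_mod_cast hs

/-- Grönwall's inequality run backwards in time, for `f(z) = F(t' - z, w)`. -/
theorem CondE2.energy_zero_le (hE1 : CondE1 E T x₀) (hE2 : CondE2 E P T x₀ CP) {t' : ℝ}
    (ht' : t' ∈ Icc 0 T) (w : X) :
    E 0 w + dist x₀ w ≤ (E t' w + dist x₀ w) * Real.exp (CP * t') := by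
  set f : ℝ → ℝ := fun z => E (t' - z) w + dist x₀ w
  have hmaps : MapsTo (fun z => t' - z) (Icc 0 t') (Icc 0 T) := fun z hz =>
    ⟨by linarith [hz.2], by linarith [hz.1, ht'.2]⟩
  have hcont : ContinuousOn f (Icc 0 t') :=
    ((hE1.continuousOn_time hE2 w).comp (by fun_prop) hmaps).add continuousOn_const
  have hderiv : ∀ x ∈ Ico 0 t', ∀ r, CP * f x < r →
      ∃ᶠ z in 𝓝[>] x, (z - x)⁻¹ * (f z - f x) < r := by
    intro x hx r hr
    have hσ : t' - x ∈ Icc 0 T := hmaps (Ico_subset_Icc_self hx)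
    have hpos : 0 < t' - x := sub_pos.2 hx.2
    have hmaps' : Tendsto (fun z => t' - z) (𝓝[>] x) (𝓝[Ico 0 (t' - x)] (t' - x)) := by
      rw [nhdsWithin_Ico_eq_nhdsLT hpos]
      exact (continuous_const.sub continuous_id).continuousWithinAt.tendsto_nhdsWithin
        fun z (hz : x < z) => show t' - z < t' - x by linarith
    refine Eventually.frequently ?_
    filter_upwards [hmaps'.eventually (hE2.eventually_neg_lt_slope hσ w hr),
      self_mem_nhdsWithin] with z hz (hxz : x < z)
    have hzx : 0 < z - x := sub_pos.2 hxz
    rw [show t' - x - (t' - z) = z - x by ring, lt_div_iff₀ hzx] at hz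
    rw [inv_mul_lt_iff₀ hzx]
    simp only [f]
    linarith
  have := le_gronwallBound_of_liminf_deriv_right_le (K := CP) (ε := 0) hcont hderiv le_rfl
    (fun x _ => (add_zero _).ge) t' ⟨ht'.1, le_rfl⟩
  simpa [f, gronwallBound_ε0] using this

end TimeRegularity

section Minimization

variable {E : ℝ → X → ℝ} {T : ℝ} {x₀ : X}

theorem CondE1.isCompact_sublevel (hE1 : CondE1 E T x₀) {t : ℝ} (ht : t ∈ Icc 0 T) (C : ℝ) :
    IsCompact {v : X | E t v + dist x₀ v ≤ C} := by
  have hrange : IsClosed (range (Prod.mk t : X → ℝ × X)) := by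
    convert (isClosed_singleton (x := t)).prod (isClosed_univ (X := X)) using 1
    ext ⟨s, v⟩
    simp [eq_comm]
  convert (isInducing_prodMkRight t).isCompact_preimage hrange (hE1 C).2 using 1
  ext v
  simp only [mem_ofPred_eq, mem_preimage]
  exact ⟨fun hv => ⟨ht, hv⟩, And.right⟩

theorem CondE1.lowerSemicontinuousOn_sublevel (hE1 : CondE1 E T x₀) {t : ℝ}
    (ht : t ∈ Icc 0 T) (C : ℝ) :
    LowerSemicontinuousOn (E t) {v : X | E t v + dist x₀ v ≤ C} :=
  (hE1 C).1.comp (continuous_const.prodMk continuous_id).continuousOn fun _ hv => ⟨ht, hv⟩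

/-- Outside the sublevel set `{F(t,·) ≤ F(t,u) + R}` the functional `E(t,·) + a·d(u,·)` exceeds
its value at `u` on the ball of radius `R`, so the minimum may be taken over a compact set. -/
theorem CondE1.exists_isMinOn_closedBall (hE1 : CondE1 E T x₀) {t : ℝ} (ht : t ∈ Icc 0 T)
    (u : X) {R : ℝ} (hR : 0 ≤ R) (a : ℝ≥0) :
    ∃ w ∈ Metric.closedBall u R,
      IsMinOn (fun v => E t v + a * dist u v) (Metric.closedBall u R) w := by
  set K := {v : X | E t v + dist x₀ v ≤ E t u + dist x₀ u + R} ∩ Metric.closedBall u R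
  have huK : u ∈ K := ⟨by simp [hR], Metric.mem_closedBall_self hR⟩
  have hlsc : LowerSemicontinuousOn (fun v => E t v + a * dist u v) K :=
    ((hE1.lowerSemicontinuousOn_sublevel ht _).mono inter_subset_left).add
      (by fun_prop : Continuous fun v => (a : ℝ) * dist u v).continuousOn.lowerSemicontinuousOn
  obtain ⟨w, hwK, hmin⟩ := hlsc.exists_isMinOn ⟨u, huK⟩
    ((hE1.isCompact_sublevel ht _).inter_right Metric.isClosed_closedBall)
  refine ⟨w, hwK.2, fun v hv => ?_⟩
  by_cases hvK : v ∈ K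
  · exact hmin hvK
  have hvF : E t u + dist x₀ u + R < E t v + dist x₀ v := by
    simpa [K, hv] using hvK
  have hwu : E t w + a * dist u w ≤ E t u := by simpa using hmin huK
  have hdist : dist x₀ v ≤ dist x₀ u + R :=
    (dist_triangle x₀ u v).trans (add_le_add_right (Metric.mem_closedBall'.1 hv) _)
  show E t w + a * dist u w ≤ E t v + a * dist u v
  linarith [mul_nonneg a.coe_nonneg (dist_nonneg (x := u) (y := v))]

theorem slopeE_le_of_isLocalMin {E : ℝ → X → ℝ} {t : ℝ} {u w : X} {a : ℝ≥0}
    (hmin : IsLocalMin (fun v => E t v + a * dist u v) w) : slopeE E t w ≤ a := by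
  refine limsup_le_of_le (by isBoundedDefault) ?_
  filter_upwards [nhdsWithin_le_nhds hmin, self_mem_nhdsWithin] with v hv (hvw : v ≠ w)
  rw [← ENNReal.ofReal_coe_nnreal]
  refine ENNReal.ofReal_le_ofReal ((div_le_iff₀ (dist_pos.2 hvw.symm)).2 ?_)
  have := mul_le_mul_of_nonneg_left (dist_triangle u w v) a.coe_nonneg
  linarith

end Minimization

section MoreauYosida

theorem exists_sub_le_of_tendsto_div_atTop {ψ : ℝ → ℝ} (hψnn : ∀ r : ℝ, 0 ≤ r → 0 ≤ ψ r)
    (hψsuper : Tendsto (fun r => ψ r / r) atTop atTop) :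
    ∃ M : ℝ, ∀ r : ℝ, 0 ≤ r → r - M ≤ ψ r := by
  obtain ⟨M, hM⟩ := (hψsuper.eventually_ge_atTop 1).exists_forall_of_atTop
  refine ⟨max M 1, fun r hr => ?_⟩
  rcases le_or_gt (max M 1) r with hMr | hrM
  · have hr1 : 0 < r := one_pos.trans_le ((le_max_right _ _).trans hMr)
    have := (le_div_iff₀ hr1).1 (hM r ((le_max_left _ _).trans hMr))
    linarith [le_max_right M 1]
  · linarith [hψnn r hr]

variable {E : ℝ → X → ℝ} {ψ : ℝ → ℝ} {τ t : ℝ} {M : ℝ}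

theorem bddBelow_MYosida (x₀ u : X) (hE : ∀ w, -dist x₀ w ≤ E t w)
    (hM : ∀ r : ℝ, 0 ≤ r → r - M ≤ ψ r) (hτ : 0 < τ) :
    BddBelow {v : ℝ | ∃ w : X, v = τ * ψ (dist u w / τ) + E t w} := by
  refine ⟨-dist x₀ u - M * τ, ?_⟩
  rintro _ ⟨w, rfl⟩
  have hψ := mul_le_mul_of_nonneg_left (hM (dist u w / τ) (by positivity)) hτ.le
  rw [mul_sub, mul_div_cancel₀ _ hτ.ne'] at hψ
  linarith [hE w, dist_triangle x₀ u w]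

theorem mul_sub_le_div_of_isMinOn_closedBall {u w : X} {a : ℝ≥0} {r : ℝ}
    (hbdd : BddBelow {v : ℝ | ∃ w : X, v = τ * ψ (dist u w / τ) + E t w}) (hτ : 0 < τ)
    (hr : 0 ≤ r) (hmin : IsMinOn (fun v => E t v + a * dist u v) (Metric.closedBall u (r * τ)) w)
    (hw : dist u w = r * τ) :
    a * r - ψ r ≤ (E t u - MYosida E ψ τ t u) / τ := by
  have hY : MYosida E ψ τ t u ≤ τ * ψ r + E t w := by
    have := csInf_le hbdd ⟨w, rfl⟩
    rwa [hw, mul_div_cancel_right₀ _ hτ.ne'] at this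
  have hwu : E t w + a * (r * τ) ≤ E t u := by
    simpa [hw] using hmin (Metric.mem_closedBall_self (mul_nonneg hr hτ.le))
  rw [le_div_iff₀ hτ]
  linarith

end MoreauYosida

theorem psiStar_le_of_forall_lt {ψ : ℝ → ℝ} {s L : ℝ≥0∞}
    (h : ∀ r : ℝ, 0 < r → ∀ a : ℝ≥0, (a : ℝ≥0∞) < s → ENNReal.ofReal (a * r - ψ r) ≤ L) :
    psiStar ψ s ≤ L := by
  refine iSup₂_le fun r hr => ?_
  rcases hr.eq_or_lt with rfl | hr
  · simp
  have hr₀ : ENNReal.ofReal r ≠ 0 := by simpa using hr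
  rw [tsub_le_iff_right, ← ENNReal.le_div_iff_mul_le (.inl hr₀) (.inl ENNReal.ofReal_ne_top)]
  refine ENNReal.le_of_forall_nnreal_lt fun a ha => ?_
  rw [ENNReal.le_div_iff_mul_le (.inl hr₀) (.inl ENNReal.ofReal_ne_top),
    ← ENNReal.ofReal_coe_nnreal, ← ENNReal.ofReal_mul a.coe_nonneg]
  calc ENNReal.ofReal (a * r) = ENNReal.ofReal ((a * r - ψ r) + ψ r) := by rw [sub_add_cancel]
    _ ≤ ENNReal.ofReal (a * r - ψ r) + ENNReal.ofReal (ψ r) := ENNReal.ofReal_add_le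
    _ ≤ L + ENNReal.ofReal (ψ r) := add_le_add_left (h r hr a ha) _

theorem Filter.Tendsto.of_mem_closedBall {ι α : Type*} [PseudoMetricSpace α] {l : Filter ι}
    {x y : ι → α} {z : α} {ρ : ι → ℝ} (hx : Tendsto x l (𝓝 z)) (hρ : Tendsto ρ l (𝓝 0))
    (hy : ∀ i, y i ∈ Metric.closedBall (x i) (ρ i)) : Tendsto y l (𝓝 z) := by
  rw [tendsto_iff_dist_tendsto_zero] at hx ⊢
  have hbound : Tendsto (fun i => ρ i + dist (x i) z) l (𝓝 0) := by simpa using hρ.add hx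
  exact squeeze_zero (fun _ => dist_nonneg)
    (fun i => (dist_triangle (y i) (x i) z).trans (by gcongr; exact hy i)) hbound

section SlopeLowerBound

variable {E P : ℝ → X → ℝ} {T : ℝ} {x₀ : X} {CP : ℝ}

theorem CondE2.energy_zero_le_of_le (hE1 : CondE1 E T x₀) (hE2 : CondE2 E P T x₀ CP)
    {t' : ℝ} (ht' : t' ∈ Icc 0 T) {w : X} {C D : ℝ} (hC : E t' w ≤ C) (hD : dist x₀ w ≤ D) :
    E 0 w + dist x₀ w ≤ (C + D) * Real.exp (CP * T) :=
  (hE2.energy_zero_le hE1 ht' w).trans <|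
    mul_le_mul (by linarith) (Real.exp_le_exp.2 (mul_le_mul_of_nonneg_left ht'.2 hE2.1.le))
      (Real.exp_pos _).le ((hE2.energy_add_dist_nonneg ht' w).trans (by linarith))

theorem CondE3'.eventually_lt_slopeE (hE1 : CondE1 E T x₀) (hE2 : CondE2 E P T x₀ CP)
    (hE3' : CondE3' E P T x₀) {tk : ℕ → ℝ} {t : ℝ} (htk : ∀ k, tk k ∈ Icc 0 T)
    (ht : t ∈ Icc 0 T) (htkt : Tendsto tk atTop (𝓝 t)) {w : ℕ → X} {u : X}
    (hw : Tendsto w atTop (𝓝 u)) {C : ℝ} (hC : ∀ k, E (tk k) (w k) ≤ C) {a : ℝ≥0}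
    (ha : (a : ℝ≥0∞) < slopeE E t u) :
    ∀ᶠ k in atTop, (a : ℝ≥0∞) < slopeE E (tk k) (w k) := by
  by_contra hfreq
  simp only [not_eventually, not_lt] at hfreq
  obtain ⟨φ, hφ, hslope⟩ := extraction_of_frequently_atTop hfreq
  obtain ⟨D, hD⟩ := (Metric.isBounded_iff_subset_closedBall x₀).1
    (Metric.isBounded_range_of_tendsto w hw)
  have hdist : ∀ k, dist x₀ (w k) ≤ D := fun k => by
    simpa [dist_comm] using hD (mem_range_self k)
  have hlsc := (hE3' (tk ∘ φ) (w ∘ φ) t u (fun _ => htk _) ht (htkt.comp hφ.tendsto_atTop)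
    (hw.comp hφ.tendsto_atTop) ⟨_, fun _ => hE2.energy_zero_le_of_le hE1 (htk _) (hC _) (hdist _)⟩
    ⟨a, ENNReal.coe_ne_top, hslope⟩).1
  exact (hlsc.trans (liminf_le_of_frequently_le' (Frequently.of_forall hslope))).not_gt ha

end SlopeLowerBound

theorem statement15_general
    {X : Type*} [MetricSpace X]
    (T : ℝ) (E P : ℝ → X → ℝ) (x₀ : X) (CP : ℝ)
    (hE1 : CondE1 E T x₀) (hE2 : CondE2 E P T x₀ CP)
    (hE3' : CondE3' E P T x₀)
    (ψ : ℝ → ℝ)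
    (hψnn : ∀ r : ℝ, 0 ≤ r → 0 ≤ ψ r)
    (hψsuper : Tendsto (fun r => ψ r / r) atTop atTop)
    (τ : ℕ → ℝ) (hτpos : ∀ k, 0 < τ k)
    (hτ : Tendsto τ atTop (𝓝 (0 : ℝ)))
    (tk : ℕ → ℝ) (t : ℝ) (htk : ∀ k, tk k ∈ Icc (0 : ℝ) T) (ht : t ∈ Icc (0 : ℝ) T)
    (htkt : Tendsto tk atTop (𝓝 t))
    (uk : ℕ → X) (u : X) (huk : Tendsto uk atTop (𝓝 u))
    (C : ℝ) (hC : ∀ k, E (tk k) (uk k) ≤ C) :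
    psiStar ψ (slopeE E t u) ≤
      Filter.liminf
        (fun k => ENNReal.ofReal ((E (tk k) (uk k) - MYosida E ψ (τ k) (tk k) (uk k)) / τ k))
        atTop := by
  obtain ⟨M, hM⟩ := exists_sub_le_of_tendsto_div_atTop hψnn hψsuper
  have hbdd (k : ℕ) := bddBelow_MYosida x₀ (uk k)
    (fun w => by linarith [hE2.energy_add_dist_nonneg (htk k) w]) hM (hτpos k)
  refine psiStar_le_of_forall_lt fun r hr a ha => le_liminf_of_le (by isBoundedDefault) ?_
  choose w hw hmin using fun k =>
    hE1.exists_isMinOn_closedBall (htk k) (uk k) (mul_pos hr (hτpos k)).le a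
  have hwu : Tendsto w atTop (𝓝 u) := huk.of_mem_closedBall (by simpa using hτ.const_mul r) hw
  have hwC (k : ℕ) : E (tk k) (w k) ≤ C := by
    have := isMinOn_iff.1 (hmin k) (uk k) (Metric.mem_closedBall_self (mul_pos hr (hτpos k)).le)
    simp only [dist_self, mul_zero, add_zero] at this
    linarith [hC k, mul_nonneg a.coe_nonneg (dist_nonneg (x := uk k) (y := w k))]
  filter_upwards [hE3'.eventually_lt_slopeE hE1 hE2 htk ht htkt hwu hwC ha] with k hk
  have hsphere : dist (uk k) (w k) = r * τ k := by
    by_contra hne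
    have hball : w k ∈ Metric.ball (uk k) (r * τ k) :=
      Metric.mem_ball'.2 ((Metric.mem_closedBall'.1 (hw k)).lt_of_ne hne)
    exact hk.not_ge
      (slopeE_le_of_isLocalMin ((hmin k).isLocalMin (Metric.closedBall_mem_nhds_of_mem hball)))
  exact ENNReal.ofReal_le_ofReal
    (mul_sub_le_div_of_isMinOn_closedBall (hbdd k) (hτpos k) hr.le (hmin k) hsphere)

theorem statement15
    {X : Type*} [MetricSpace X] [CompleteSpace X]
    (T : ℝ) (hT : 0 < T) (E P : ℝ → X → ℝ) (x₀ : X) (CP : ℝ)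
    (hE1 : CondE1 E T x₀) (hE2 : CondE2 E P T x₀ CP)
    (hE3' : CondE3' E P T x₀)
    (ψ : ℝ → ℝ) (hψconv : ConvexOn ℝ (Ici 0) ψ)
    (hψlsc : LowerSemicontinuousOn ψ (Ici 0))
    (hψ0 : ψ 0 = 0) (hψnn : ∀ r : ℝ, 0 ≤ r → 0 ≤ ψ r)
    (hψsuper : Tendsto (fun r => ψ r / r) atTop atTop)
    (τ : ℕ → ℝ) (hτpos : ∀ k, 0 < τ k) (hτanti : Antitone τ)
    (hτ : Tendsto τ atTop (𝓝 (0 : ℝ)))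
    (tk : ℕ → ℝ) (t : ℝ) (htk : ∀ k, tk k ∈ Icc (0 : ℝ) T) (ht : t ∈ Icc (0 : ℝ) T)
    (htkt : Tendsto tk atTop (𝓝 t))
    (uk : ℕ → X) (u : X) (huk : Tendsto uk atTop (𝓝 u))
    (C : ℝ) (hC : ∀ k, E (tk k) (uk k) ≤ C) :
    psiStar ψ (slopeE E t u) ≤
      Filter.liminf
        (fun k => ENNReal.ofReal ((E (tk k) (uk k) - MYosida E ψ (τ k) (tk k) (uk k)) / τ k))
        atTop :=
  statement15_general T E P x₀ CP hE1 hE2 hE3' ψ hψnn hψsuper τ hτpos hτ tk t htk ht htkt uk u huk C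
    hC

end
end
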